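/- arXiv:2012.15356 — 6 statements merged into one kernel-verified Lean document; each statement's English description precedes it below -/
import Mathlib

section
/- If F is a family of subsets of [n], i < j, and Δ_{i,j}(F) ≠ F, then the total weight sum ∑_{G ∈ Δ_{i,j}(F)} ∑_{b ∈ G} b is strictly smaller than ∑_{F' ∈ F} ∑_{a ∈ F'} a. -/
/-! `Delta i j` is Mathlib's UV-compression `𝓒 {i} {j}`. It keeps the sets whose image is
already in the family and replaces the others, injectively, by their images; a replaced set `A`
has image of weight `∑ A - j + i < ∑ A`, and `Delta i j F ≠ F` means some set is replaced. -/

open Finset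

def delta (i j : ℕ) (A : Finset ℕ) : Finset ℕ :=
  if j ∈ A ∧ i ∉ A then insert i (A.erase j) else A

def Delta (i j : ℕ) (F : Finset (Finset ℕ)) : Finset (Finset ℕ) :=
  F.image (delta i j) ∪ F.filter (fun A => delta i j A ∈ F)

open scoped FinsetFamily

namespace UV

section GeneralizedBooleanAlgebra

variable {α : Type*} [GeneralizedBooleanAlgebra α] [DecidableRel (@Disjoint α _ _)]
  [DecidableLE α] [DecidableEq α] {u v : α} {s : Finset α}

theorem image_compress_union_filter :
    s.image (compress u v) ∪ {a ∈ s | compress u v a ∈ s} = 𝓒 u v s := by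
  ext a
  simp only [mem_union, mem_image, mem_filter, mem_compression]
  constructor
  · rintro (⟨b, hb, rfl⟩ | h)
    · by_cases hcb : compress u v b ∈ s
      · exact .inl ⟨hcb, by rwa [compress_idem]⟩
      · exact .inr ⟨hcb, b, hb, rfl⟩
    · exact .inl h
  · rintro (h | ⟨-, hb⟩)
    · exact .inr h
    · exact .inl hb

theorem sum_compression {M : Type*} [AddCommMonoid M] (w : α → M) :
    ∑ a ∈ 𝓒 u v s, w a = ∑ a ∈ s with compress u v a ∈ s, w a +
      ∑ a ∈ s with compress u v a ∉ s, w (compress u v a) := by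
  rw [compression, sum_union compress_disjoint, filter_image, sum_image compress_injOn]

theorem compression_eq_self_of_filter_eq_empty (h : {a ∈ s | compress u v a ∉ s} = ∅) :
    𝓒 u v s = s := by
  rw [compression, filter_image, h, image_empty, union_empty, filter_eq_self]
  exact fun a ha => by_contra (filter_eq_empty_iff.mp h ha)

theorem sum_compression_lt {M : Type*} [AddCommMonoid M] [PartialOrder M]
    [IsOrderedCancelAddMonoid M] {w : α → M}
    (hw : ∀ a ∈ s, compress u v a ≠ a → w (compress u v a) < w a) (hs : 𝓒 u v s ≠ s) :
    ∑ a ∈ 𝓒 u v s, w a < ∑ a ∈ s, w a := by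
  have hmoved : {a ∈ s | compress u v a ∉ s}.Nonempty :=
    nonempty_iff_ne_empty.mpr fun h => hs (compression_eq_self_of_filter_eq_empty h)
  have hlt : ∑ a ∈ s with compress u v a ∉ s, w (compress u v a) <
      ∑ a ∈ s with compress u v a ∉ s, w a := by
    refine sum_lt_sum_of_nonempty hmoved fun a ha => ?_
    obtain ⟨has, hcs⟩ := mem_filter.mp ha
    exact hw a has fun hca => hcs (by rwa [hca])
  rw [sum_compression, ← sum_filter_add_sum_filter_not s (fun a => compress u v a ∈ s)]
  exact add_lt_add_right hlt _

end GeneralizedBooleanAlgebra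

theorem sum_compress_lt {α M : Type*} [DecidableEq α] [AddCommMonoid M] [PartialOrder M]
    [IsOrderedCancelAddMonoid M] {f : α → M} {u v a : Finset α}
    (huv : ∑ x ∈ u, f x < ∑ x ∈ v, f x) (ha : compress u v a ≠ a) :
    ∑ x ∈ compress u v a, f x < ∑ x ∈ a, f x := by
  unfold compress at ha ⊢
  split_ifs at ha ⊢ with h
  · obtain ⟨hua, hva⟩ := h
    have hv : v ⊆ a ∪ u := hva.trans subset_union_left
    refine lt_of_add_lt_add_right (a := ∑ x ∈ v, f x) ?_
    calc ∑ x ∈ (a ⊔ u) \ v, f x + ∑ x ∈ v, f x = ∑ x ∈ a, f x + ∑ x ∈ u, f x := by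
          rw [sup_eq_union, sum_sdiff hv, sum_union hua.symm]
      _ < ∑ x ∈ a, f x + ∑ x ∈ v, f x := add_lt_add_right huv _
  · exact absurd rfl ha

end UV

theorem delta_eq_compress {i j : ℕ} (hij : i ≠ j) : delta i j = UV.compress {i} {j} := by
  ext A x
  simp only [delta, UV.compress, disjoint_singleton_left, singleton_subset_iff]
  split_ifs <;> grind

theorem Delta_eq_compression {i j : ℕ} (hij : i ≠ j) (F : Finset (Finset ℕ)) :
    Delta i j F = 𝓒 {i} {j} F := by
  rw [Delta, delta_eq_compress hij, UV.image_compress_union_filter]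

theorem compression_weight_decreases_general (F : Finset (Finset ℕ))
    (i j : ℕ) (hij : i < j) (hne : Delta i j F ≠ F) :
    ∑ G ∈ Delta i j F, ∑ b ∈ G, b < ∑ A ∈ F, ∑ a ∈ A, a := by
  rw [Delta_eq_compression hij.ne] at hne ⊢
  exact UV.sum_compression_lt (fun A _ hA => UV.sum_compress_lt (by simpa using hij) hA) hne

theorem compression_weight_decreases (n : ℕ) (F : Finset (Finset ℕ))
    (hF : F ⊆ (Finset.Icc 1 n).powerset)
    (i j : ℕ) (hi : i ∈ Finset.Icc 1 n) (hj : j ∈ Finset.Icc 1 n)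
    (hij : i < j) (hne : Delta i j F ≠ F) :
    ∑ G ∈ Delta i j F, ∑ b ∈ G, b < ∑ A ∈ F, ∑ a ∈ A, a :=
  compression_weight_decreases_general F i j hij hne
end

section
/- Let 1 ≤ r ≤ s, n ≥ 1. If A is a non-empty family of subsets of [n] each of size at most r, B is a non-empty family of subsets of [n] each of size at most s, and A and B are cross-intersecting, then |A| + |B| ≤ 1 + ∑_{i=1}^{s} ( C(n,i) − C(n−r,i) ). -/
open Finset

/-!
Write `meetCount n r s` for the number of nonempty subsets of size at most `s` of an `n`-set that
meet a fixed `r`-subset; the bound is `1 + meetCount n r s`.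

We induct on the ground set `X`. If `s = |X|`, then `𝒜`, the complements of the members of `ℬ`, and
the `2 ^ (|X| - r) - 1` sets strictly containing an `r`-superset of a member of `𝒜` are pairwise
disjoint subsets of `X`. If `s < |X|`, fix `x ∈ X`. Simultaneous compressions replacing `x` by some
`i` preserve cross-intersection, so both families may be taken stable under them. Split each family
into the sets avoiding `x` and the links `S` with `insert x S` in the family. By stability a link of
`𝒜` and a link of `ℬ` can only be disjoint if they are complementary in `X \ {x}`. Moving the links
of `𝒜` whose complement is a link of `ℬ` to the part avoiding `x` therefore produces two
cross-intersecting pairs on `X \ {x}`, with parameters `(r, s)` and `(r - 1, s - 1)`; induction and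
Pascal's rule `meetCount (m + 1) r s = meetCount m r s + meetCount m r (s - 1)` conclude.
-/

namespace BorgFeghali

def meetCount (n r s : ℕ) : ℕ := ∑ i ∈ Icc 1 s, (n.choose i - (n - r).choose i)

theorem meetCount_succ_right (n r s : ℕ) :
    meetCount n r (s + 1) = meetCount n r s + (n.choose (s + 1) - (n - r).choose (s + 1)) :=
  sum_Icc_succ_top (Nat.le_add_left 1 s) _

theorem meetCount_mono {n r r' s s' : ℕ} (hr : r ≤ r') (hs : s ≤ s') :
    meetCount n r s ≤ meetCount n r' s' :=
  calc meetCount n r s ≤ ∑ i ∈ Icc 1 s, (n.choose i - (n - r').choose i) :=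
        sum_le_sum fun i _ ↦ Nat.sub_le_sub_left (Nat.choose_le_choose i (by omega)) _
    _ ≤ meetCount n r' s' := sum_le_sum_of_subset (Icc_subset_Icc_right hs)

theorem meetCount_min (n r s : ℕ) : meetCount n (min r n) (min s n) = meetCount n r s := by
  rw [meetCount, meetCount, show n - min r n = n - r by omega]
  refine sum_subset (Icc_subset_Icc_right (min_le_left s n)) fun i hi hi' ↦ ?_
  simp only [mem_Icc] at hi hi'
  rw [Nat.choose_eq_zero_of_lt (by omega : n < i), Nat.zero_sub]

theorem meetCount_succ_succ {m r : ℕ} (hr : r ≤ m) (s : ℕ) :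
    meetCount (m + 1) r (s + 1) = meetCount m r (s + 1) + meetCount m r s := by
  induction s with
  | zero => simp [meetCount]; omega
  | succ s ih =>
    have := Nat.choose_le_choose (s + 1) (Nat.sub_le m r)
    have := Nat.choose_le_choose (s + 1 + 1) (Nat.sub_le m r)
    have := meetCount_succ_right m r s
    rw [meetCount_succ_right (m + 1) r (s + 1), ih, meetCount_succ_right m r (s + 1),
      show m + 1 - r = m - r + 1 by omega, Nat.choose_succ_succ', Nat.choose_succ_succ']
    omega

theorem meetCount_lt_meetCount_succ {m r s : ℕ} (hr : r < m) (hs : 1 ≤ s) :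
    meetCount m r s < meetCount m (r + 1) s := by
  induction s, hs using Nat.le_induction with
  | base => simp [meetCount]; omega
  | succ s _ ih =>
    rw [meetCount_succ_right, meetCount_succ_right]
    have := Nat.choose_le_choose (s + 1) (by omega : m - (r + 1) ≤ m - r)
    omega

theorem sum_Icc_choose_lt_choose_add (k r : ℕ) :
    ∑ i ∈ Icc 1 r, k.choose i < (k + r).choose r := by
  induction r with
  | zero => simp
  | succ r ih =>
    rw [sum_Icc_succ_top (by omega), ← add_assoc, Nat.choose_succ_succ']
    have := Nat.choose_le_choose (r + 1) (Nat.le_add_right k r)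
    omega

theorem sum_Icc_choose_le_meetCount {m t : ℕ} (ht : t < m) :
    ∑ i ∈ Icc 1 t, m.choose i ≤ meetCount m (t + 1) (t + 1) := by
  have hlt := sum_Icc_choose_lt_choose_add (m - (t + 1)) (t + 1)
  rw [Nat.sub_add_cancel ht] at hlt
  rw [meetCount, sum_tsub_distrib _ fun i _ ↦ Nat.choose_le_choose i (Nat.sub_le m _),
    sum_Icc_succ_top (by omega)]
  omega

theorem meetCount_pred_le {m k r s : ℕ} (hk : k ≤ s) (hrs : r ≤ s) (hsm : s ≤ m) :
    meetCount m k (r - 1) ≤ meetCount m r (s - 1) := by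
  rcases hrs.eq_or_lt with rfl | hrs
  · exact meetCount_mono hk le_rfl
  obtain _ | t := r
  · simp [meetCount]
  calc meetCount m k (t + 1 - 1) ≤ ∑ i ∈ Icc 1 t, m.choose i :=
        sum_le_sum fun i _ ↦ Nat.sub_le _ _
    _ ≤ meetCount m (t + 1) (t + 1) := sum_Icc_choose_le_meetCount (by omega)
    _ ≤ meetCount m (t + 1) (s - 1) := meetCount_mono le_rfl (by omega)

theorem sum_Icc_choose_eq {k n : ℕ} (hk : k ≤ n) : ∑ i ∈ Icc 1 n, k.choose i = 2 ^ k - 1 := by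
  have h : ∑ i ∈ range (n + 1), k.choose i = 2 ^ k := by
    rw [← Nat.sum_range_choose]
    exact (sum_subset (range_subset_range.2 (by omega)) fun i _ hi ↦
      Nat.choose_eq_zero_of_lt (by simp at hi; omega)).symm
  rw [range_eq_Ico, sum_eq_sum_Ico_succ_bot (by omega)] at h
  change _ + ∑ i ∈ Icc 1 n, k.choose i = _ at h
  simp only [Nat.choose_zero_right] at h
  omega

theorem meetCount_self (n r : ℕ) : meetCount n r n = 2 ^ n - 2 ^ (n - r) := by
  rw [meetCount, sum_tsub_distrib _ fun i _ ↦ Nat.choose_le_choose i (Nat.sub_le n r),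
    sum_Icc_choose_eq le_rfl, sum_Icc_choose_eq (Nat.sub_le n r)]
  have := Nat.one_le_two_pow (n := n - r)
  omega

variable {α : Type*} {X Y K : Finset α} {𝒜 ℬ 𝒞 : Finset (Finset α)}
  {S T : Finset α} {i x : α} {r s t : ℕ}

/-- `𝒜 ⊆ (X choose ≤ r)`. -/
def SizeAtMost (X : Finset α) (r : ℕ) (𝒜 : Finset (Finset α)) : Prop :=
  ∀ S ∈ 𝒜, S ⊆ X ∧ #S ≤ r

theorem SizeAtMost.mono (h : SizeAtMost X r 𝒜) (hr : r ≤ s) (h𝒜 : ℬ ⊆ 𝒜) : SizeAtMost X s ℬ :=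
  fun S hS ↦ ⟨(h S (h𝒜 hS)).1, (h S (h𝒜 hS)).2.trans hr⟩

theorem SizeAtMost.min_card (h : SizeAtMost X r 𝒜) : SizeAtMost X (min r #X) 𝒜 :=
  fun S hS ↦ ⟨(h S hS).1, le_min (h S hS).2 (card_le_card (h S hS).1)⟩

variable [DecidableEq α]

def CrossIntersecting (𝒜 ℬ : Finset (Finset α)) : Prop :=
  ∀ A ∈ 𝒜, ∀ B ∈ ℬ, (A ∩ B).Nonempty

namespace SizeAtMost

theorem union (h𝒜 : SizeAtMost X r 𝒜) (hℬ : SizeAtMost X r ℬ) : SizeAtMost X r (𝒜 ∪ ℬ) :=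
  fun S hS ↦ (mem_union.1 hS).elim (h𝒜 S) (hℬ S)

theorem nonMemberSubfamily (h : SizeAtMost X r 𝒜) (x : α) :
    SizeAtMost (X.erase x) r (𝒜.nonMemberSubfamily x) := by
  intro S hS
  obtain ⟨hS, hxS⟩ := mem_nonMemberSubfamily.1 hS
  exact ⟨subset_erase.2 ⟨(h S hS).1, hxS⟩, (h S hS).2⟩

theorem memberSubfamily (h : SizeAtMost X r 𝒜) (x : α) :
    SizeAtMost (X.erase x) (r - 1) (𝒜.memberSubfamily x) := by
  intro S hS
  obtain ⟨hS, hxS⟩ := mem_memberSubfamily.1 hS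
  obtain ⟨hSX, hSr⟩ := h _ hS
  rw [card_insert_of_notMem hxS] at hSr
  exact ⟨subset_erase.2 ⟨(subset_insert x S).trans hSX, hxS⟩, by omega⟩

end SizeAtMost

theorem card_le_meetCount (hK : K ⊆ Y) (h𝒜 : SizeAtMost Y t 𝒜)
    (hmeet : ∀ S ∈ 𝒜, (S ∩ K).Nonempty) : #𝒜 ≤ meetCount #Y #K t := by
  have hmaps : Set.MapsTo card (𝒜 : Set (Finset α)) (Icc 1 t) := fun S hS ↦
    mem_Icc.2 ⟨card_pos.2 ((hmeet S hS).mono inter_subset_left), (h𝒜 S hS).2⟩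
  rw [card_eq_sum_card_fiberwise hmaps]
  refine sum_le_sum fun i _ ↦ ?_
  have hsub : {S ∈ 𝒜 | #S = i} ⊆ Y.powersetCard i \ (Y \ K).powersetCard i := by
    intro S hS
    obtain ⟨hS𝒜, rfl⟩ := mem_filter.1 hS
    obtain ⟨z, hz⟩ := hmeet S hS𝒜
    rw [mem_inter] at hz
    simp only [mem_sdiff, mem_powersetCard, (h𝒜 S hS𝒜).1, true_and, and_true]
    exact fun hSK ↦ (mem_sdiff.1 (hSK hz.1)).2 hz.2
  calc #{S ∈ 𝒜 | #S = i} ≤ #(Y.powersetCard i \ (Y \ K).powersetCard i) := card_le_card hsub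
    _ = (#Y).choose i - (#Y - #K).choose i := by
      rw [card_sdiff_of_subset (powersetCard_mono sdiff_subset), card_powersetCard,
        card_powersetCard, card_sdiff_of_subset hK]

namespace CrossIntersecting

theorem symm (h : CrossIntersecting 𝒜 ℬ) : CrossIntersecting ℬ 𝒜 :=
  fun B hB A hA ↦ inter_comm A B ▸ h A hA B hB

theorem union_left (h𝒜 : CrossIntersecting 𝒜 𝒞) (hℬ : CrossIntersecting ℬ 𝒞) :
    CrossIntersecting (𝒜 ∪ ℬ) 𝒞 :=
  fun S hS ↦ (mem_union.1 hS).elim (h𝒜 S) (hℬ S)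

theorem memberSubfamily_nonMemberSubfamily (h : CrossIntersecting 𝒜 ℬ) (x : α) :
    CrossIntersecting (𝒜.memberSubfamily x) (ℬ.nonMemberSubfamily x) := by
  intro S hS T hT
  obtain ⟨hS, -⟩ := mem_memberSubfamily.1 hS
  obtain ⟨hT, hxT⟩ := mem_nonMemberSubfamily.1 hT
  obtain ⟨z, hz⟩ := h _ hS T hT
  rw [mem_inter, mem_insert] at hz
  obtain ⟨rfl | hzS, hzT⟩ := hz
  · exact absurd hzT hxT
  · exact ⟨z, mem_inter.2 ⟨hzS, hzT⟩⟩

theorem card_memberSubfamily_le (h : CrossIntersecting 𝒜 ℬ) (h𝒜 : SizeAtMost X r 𝒜)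
    (hT : T ∈ ℬ.nonMemberSubfamily x) (hTX : T ⊆ X.erase x) :
    #(𝒜.memberSubfamily x) ≤ meetCount #(X.erase x) #T (r - 1) :=
  card_le_meetCount hTX (h𝒜.memberSubfamily x) fun S hS ↦
    h.memberSubfamily_nonMemberSubfamily x S hS T hT

end CrossIntersecting

open scoped FinsetFamily

theorem compress_singleton (hx : x ∈ S) (hi : i ∉ S) :
    UV.compress {i} {x} S = insert i (S.erase x) := by
  rw [UV.compress_of_disjoint_of_le (disjoint_singleton_left.2 hi) (singleton_subset_iff.2 hx)]
  ext z
  simp only [sup_eq_union, mem_sdiff, mem_union, mem_singleton, mem_insert, mem_erase]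
  grind

theorem compress_singleton_eq_self (h : x ∈ S → i ∈ S) : UV.compress {i} {x} S = S := by
  rw [UV.compress, if_neg]
  rintro ⟨hi, hx⟩
  exact disjoint_singleton_left.1 hi (h (singleton_subset_iff.1 hx))

/-- If `T` loses `x` to `i`, a set meeting `T` only in `x` either contains `i` or moves to a
set missing `T`. -/
theorem inter_compress_nonempty (hST : (S ∩ T).Nonempty)
    (hcST : (UV.compress {i} {x} S ∩ T).Nonempty) : (S ∩ UV.compress {i} {x} T).Nonempty := by
  by_cases hT : x ∈ T ∧ i ∉ T
  swap
  · rwa [compress_singleton_eq_self fun hx ↦ by by_contra hi; exact hT ⟨hx, hi⟩]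
  rw [compress_singleton hT.1 hT.2]
  obtain ⟨z, hz⟩ := hST
  rw [mem_inter] at hz
  by_contra hne
  simp only [not_nonempty_iff_eq_empty, eq_empty_iff_forall_notMem, mem_inter, mem_insert,
    mem_erase] at hne
  have hiS : i ∉ S := fun hiS ↦ hne i ⟨hiS, Or.inl rfl⟩
  obtain rfl : z = x := by_contra fun hzx ↦ hne z ⟨hz.1, Or.inr ⟨hzx, hz.2⟩⟩
  obtain ⟨w, hw⟩ := hcST
  rw [compress_singleton hz.1 hiS, mem_inter, mem_insert, mem_erase] at hw
  obtain ⟨rfl | ⟨hwz, hwS⟩, hwT⟩ := hw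
  · exact hT.2 hwT
  · exact hne w ⟨hwS, Or.inr ⟨hwz, hwT⟩⟩

theorem CrossIntersecting.compression (h : CrossIntersecting 𝒜 ℬ) :
    CrossIntersecting (𝓒 {i} {x} 𝒜) (𝓒 {i} {x} ℬ) := by
  intro S hS T hT
  rcases UV.mem_compression.1 hS with ⟨hS𝒜, hcS⟩ | ⟨hS𝒜, S', hS', rfl⟩ <;>
    rcases UV.mem_compression.1 hT with ⟨hTℬ, hcT⟩ | ⟨hTℬ, T', hT', rfl⟩
  · exact h S hS𝒜 T hTℬ
  · exact inter_compress_nonempty (h S hS𝒜 T' hT') (h _ hcS T' hT')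
  · rw [inter_comm]
    exact inter_compress_nonempty (inter_comm S' T ▸ h S' hS' T hTℬ)
      (inter_comm S' _ ▸ h S' hS' _ hcT)
  · have hiS := singleton_subset_iff.1 (UV.le_of_mem_compression_of_notMem hS hS𝒜)
    have hiT := singleton_subset_iff.1 (UV.le_of_mem_compression_of_notMem hT hTℬ)
    exact ⟨i, mem_inter.2 ⟨hiS, hiT⟩⟩

theorem SizeAtMost.compression (h : SizeAtMost X r 𝒜) (hi : i ∈ X) :
    SizeAtMost X r (𝓒 {i} {x} 𝒜) := by
  intro S hS
  rcases UV.mem_compression.1 hS with ⟨hS𝒜, -⟩ | ⟨-, S', hS', rfl⟩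
  · exact h S hS𝒜
  obtain ⟨hS'X, hS'r⟩ := h S' hS'
  refine ⟨?_, (UV.card_compress (by simp) S').trans_le hS'r⟩
  unfold UV.compress
  split_ifs
  · exact sdiff_subset.trans (union_subset hS'X (singleton_subset_iff.2 hi))
  · exact hS'X

theorem filter_mem_compression_subset (i x : α) (𝒜 : Finset (Finset α)) :
    {S ∈ 𝓒 {i} {x} 𝒜 | x ∈ S} ⊆ {S ∈ 𝒜 | x ∈ S} := by
  intro S hS
  rw [mem_filter] at hS ⊢
  refine ⟨by_contra fun hS𝒜 ↦ ?_, hS.2⟩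
  exact disjoint_singleton_left.1 (UV.disjoint_of_mem_compression_of_notMem hS.1 hS𝒜) hS.2

theorem filter_mem_compression_ssubset (hS : S ∈ 𝒜) (hcS : UV.compress {i} {x} S ∉ 𝒜) :
    {T ∈ 𝓒 {i} {x} 𝒜 | x ∈ T} ⊂ {T ∈ 𝒜 | x ∈ T} := by
  refine (ssubset_iff_of_subset (filter_mem_compression_subset i x 𝒜)).2 ⟨S, ?_, ?_⟩
  · refine mem_filter.2 ⟨hS, by_contra fun hx ↦ hcS ?_⟩
    rwa [compress_singleton_eq_self (absurd · hx)]
  · rw [mem_filter, UV.mem_compression]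
    tauto

def ShiftStable (X : Finset α) (x : α) (𝒜 : Finset (Finset α)) : Prop :=
  ∀ i ∈ X, ∀ S ∈ 𝒜, UV.compress {i} {x} S ∈ 𝒜

theorem exists_shiftStable (x : α) (h𝒜 : SizeAtMost X r 𝒜) (hℬ : SizeAtMost X s ℬ)
    (h : CrossIntersecting 𝒜 ℬ) :
    ∃ 𝒜' ℬ', #𝒜' = #𝒜 ∧ #ℬ' = #ℬ ∧ SizeAtMost X r 𝒜' ∧ SizeAtMost X s ℬ' ∧
      CrossIntersecting 𝒜' ℬ' ∧ ShiftStable X x 𝒜' ∧ ShiftStable X x ℬ' := by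
  induction hk : #{S ∈ 𝒜 | x ∈ S} + #{S ∈ ℬ | x ∈ S} using Nat.strong_induction_on
    generalizing 𝒜 ℬ with
  | _ k ih =>
  by_cases hst : ShiftStable X x 𝒜 ∧ ShiftStable X x ℬ
  · exact ⟨𝒜, ℬ, rfl, rfl, h𝒜, hℬ, h, hst⟩
  obtain ⟨i, hi, hlt⟩ : ∃ i ∈ X, #{S ∈ 𝓒 {i} {x} 𝒜 | x ∈ S} + #{S ∈ 𝓒 {i} {x} ℬ | x ∈ S} < k := by
    simp only [ShiftStable, not_and_or, not_forall, exists_prop] at hst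
    subst hk
    rcases hst with ⟨i, hi, S, hS, hcS⟩ | ⟨i, hi, S, hS, hcS⟩
    · exact ⟨i, hi, add_lt_add_of_lt_of_le (card_lt_card (filter_mem_compression_ssubset hS hcS))
        (card_le_card (filter_mem_compression_subset i x ℬ))⟩
    · exact ⟨i, hi, add_lt_add_of_le_of_lt (card_le_card (filter_mem_compression_subset i x 𝒜))
        (card_lt_card (filter_mem_compression_ssubset hS hcS))⟩
  obtain ⟨𝒜', ℬ', h𝒜', hℬ', hrest⟩ :=
    ih _ hlt (h𝒜.compression hi) (hℬ.compression hi) h.compression rfl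
  exact ⟨𝒜', ℬ', h𝒜'.trans (UV.card_compression _ _ _), hℬ'.trans (UV.card_compression _ _ _),
    hrest⟩

namespace ShiftStable

theorem exists_mem_nonMemberSubfamily (h : ShiftStable X x 𝒜) (h𝒜 : SizeAtMost X r 𝒜)
    (h𝒜ne : 𝒜.Nonempty) (hr : r < #X) : ∃ S ∈ 𝒜.nonMemberSubfamily x, #S ≤ r := by
  obtain ⟨S, hS⟩ := h𝒜ne
  by_cases hx : x ∈ S
  · obtain ⟨i, hi, hiS⟩ := exists_mem_notMem_of_card_lt_card ((h𝒜 S hS).2.trans_lt hr)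
    refine ⟨UV.compress {i} {x} S, mem_nonMemberSubfamily.2 ⟨h i hi S hS, ?_⟩,
      (UV.card_compress (by simp) S).trans_le (h𝒜 S hS).2⟩
    rw [compress_singleton hx hiS, mem_insert, mem_erase]
    rintro (rfl | ⟨hxx, -⟩)
    exacts [hiS hx, hxx rfl]
  · exact ⟨S, mem_nonMemberSubfamily.2 ⟨hS, hx⟩, (h𝒜 S hS).2⟩

theorem sdiff_subset_of_disjoint (h : ShiftStable X x 𝒜) (h𝒜ℬ : CrossIntersecting 𝒜 ℬ)
    (hS : insert x S ∈ 𝒜) (hxS : x ∉ S) (hT : insert x T ∈ ℬ) (hST : Disjoint S T) :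
    X.erase x \ S ⊆ T := by
  intro y hy
  obtain ⟨⟨hyx, hyX⟩, hyS⟩ := mem_sdiff.1 hy |>.imp_left mem_erase.1
  have hyS' : insert y S ∈ 𝒜 := by
    have := h y hyX _ hS
    rwa [compress_singleton (mem_insert_self x S) (by simp [hyx, hyS]), erase_insert hxS] at this
  obtain ⟨z, hz⟩ := h𝒜ℬ _ hyS' _ hT
  simp only [mem_inter, mem_insert] at hz
  obtain ⟨rfl | hzS, rfl | hzT⟩ := hz
  · exact absurd rfl hyx
  · exact hzT
  · exact absurd hzS hxS
  · exact absurd hzT (disjoint_left.1 hST hzS)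

end ShiftStable

def complementaryPart (Y : Finset α) (x : α) (𝒜 ℬ : Finset (Finset α)) : Finset (Finset α) :=
  {S ∈ 𝒜.memberSubfamily x | Y \ S ∈ ℬ.memberSubfamily x}

theorem complementaryPart_subset (Y : Finset α) (x : α) (𝒜 ℬ : Finset (Finset α)) :
    complementaryPart Y x 𝒜 ℬ ⊆ 𝒜.memberSubfamily x :=
  filter_subset _ _

theorem CrossIntersecting.card_add_card_eq (h : CrossIntersecting 𝒜 ℬ) (Y : Finset α) (x : α) :
    #𝒜 + #ℬ = #(𝒜.nonMemberSubfamily x ∪ complementaryPart Y x 𝒜 ℬ) + #(ℬ.nonMemberSubfamily x) +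
      (#(𝒜.memberSubfamily x \ complementaryPart Y x 𝒜 ℬ) + #(ℬ.memberSubfamily x)) := by
  have hdisj : Disjoint (𝒜.nonMemberSubfamily x) (complementaryPart Y x 𝒜 ℬ) := by
    refine disjoint_left.2 fun S hS hSP ↦ ?_
    obtain ⟨hS, hxS⟩ := mem_nonMemberSubfamily.1 hS
    obtain ⟨hYS, -⟩ := mem_memberSubfamily.1 (mem_filter.1 hSP).2
    obtain ⟨z, hz⟩ := h S hS _ hYS
    simp only [mem_inter, mem_insert, mem_sdiff] at hz
    obtain ⟨hzS, rfl | ⟨-, hzS'⟩⟩ := hz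
    exacts [hxS hzS, hzS' hzS]
  have hP := complementaryPart_subset Y x 𝒜 ℬ
  rw [card_union_of_disjoint hdisj, card_sdiff_of_subset hP,
    ← card_memberSubfamily_add_card_nonMemberSubfamily x 𝒜,
    ← card_memberSubfamily_add_card_nonMemberSubfamily x ℬ]
  have := card_le_card hP
  omega

theorem CrossIntersecting.union_complementaryPart (h : CrossIntersecting 𝒜 ℬ) (Y : Finset α) :
    CrossIntersecting (𝒜.nonMemberSubfamily x ∪ complementaryPart Y x 𝒜 ℬ)
      (ℬ.nonMemberSubfamily x) := by
  refine union_left (fun S hS T hT ↦ ?_) fun S hS ↦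
    h.memberSubfamily_nonMemberSubfamily x S (complementaryPart_subset Y x 𝒜 ℬ hS)
  exact h S (mem_nonMemberSubfamily.1 hS).1 T (mem_nonMemberSubfamily.1 hT).1

theorem ShiftStable.crossIntersecting_sdiff_complementaryPart (h : ShiftStable X x 𝒜)
    (h𝒜ℬ : CrossIntersecting 𝒜 ℬ) (hℬ : SizeAtMost X s ℬ) :
    CrossIntersecting (𝒜.memberSubfamily x \ complementaryPart (X.erase x) x 𝒜 ℬ)
      (ℬ.memberSubfamily x) := by
  intro S hS T hT
  obtain ⟨hS, hSP⟩ := mem_sdiff.1 hS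
  refine not_disjoint_iff_nonempty_inter.1 fun hST ↦ hSP (mem_filter.2 ⟨hS, ?_⟩)
  obtain ⟨hS𝒜, hxS⟩ := mem_memberSubfamily.1 hS
  have hTS : T = X.erase x \ S :=
    subset_antisymm (subset_sdiff.2 ⟨(hℬ.memberSubfamily x T hT).1, hST.symm⟩)
      (h.sdiff_subset_of_disjoint h𝒜ℬ hS𝒜 hxS (mem_memberSubfamily.1 hT).1 hST)
  rwa [← hTS]

theorem card_add_card_add_le_two_pow (hrX : r ≤ #X) (h𝒜 : SizeAtMost X r 𝒜)
    (hℬ : ∀ T ∈ ℬ, T ⊆ X) (h𝒜ne : 𝒜.Nonempty) (h𝒜ℬ : CrossIntersecting 𝒜 ℬ) :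
    #𝒜 + #ℬ + (2 ^ (#X - r) - 1) ≤ 2 ^ #X := by
  obtain ⟨R, hR⟩ := h𝒜ne
  obtain ⟨R', hRR', hR'X, hR'⟩ := exists_subsuperset_card_eq (h𝒜 R hR).1 (h𝒜 R hR).2 hrX
  have hcompl : #(ℬ.image (X \ ·)) = #ℬ := card_image_of_injOn fun T hT T' hT' hTT' ↦ by
    rw [← Finset.sdiff_sdiff_eq_self (hℬ T hT), ← Finset.sdiff_sdiff_eq_self (hℬ T' hT')]
    exact congrArg (X \ ·) hTT'
  have h₁ : Disjoint 𝒜 (ℬ.image (X \ ·)) := by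
    refine disjoint_right.2 fun S hS hS𝒜 ↦ ?_
    obtain ⟨T, hT, rfl⟩ := mem_image.1 hS
    obtain ⟨z, hz⟩ := h𝒜ℬ _ hS𝒜 T hT
    simp only [mem_inter, mem_sdiff] at hz
    exact hz.1.2 hz.2
  have h₂ : Disjoint (𝒜 ∪ ℬ.image (X \ ·)) (Ioc R' X) := by
    refine disjoint_right.2 fun Z hZ hZ' ↦ ?_
    obtain ⟨hR'Z, -⟩ := mem_Ioc.1 hZ
    rcases mem_union.1 hZ' with hZ𝒜 | hZℬ
    · exact absurd (card_lt_card hR'Z) (by rw [hR']; exact (h𝒜 Z hZ𝒜).2.not_gt)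
    · obtain ⟨T, hT, rfl⟩ := mem_image.1 hZℬ
      obtain ⟨z, hz⟩ := h𝒜ℬ R hR T hT
      rw [mem_inter] at hz
      exact (mem_sdiff.1 (hR'Z.subset (hRR' hz.1))).2 hz.2
  have hsub : 𝒜 ∪ ℬ.image (X \ ·) ∪ Ioc R' X ⊆ X.powerset := by
    refine union_subset (union_subset (fun S hS ↦ mem_powerset.2 (h𝒜 S hS).1) ?_) ?_
    · exact image_subset_iff.2 fun T _ ↦ mem_powerset.2 sdiff_subset
    · exact fun Z hZ ↦ mem_powerset.2 (mem_Ioc.1 hZ).2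
  calc #𝒜 + #ℬ + (2 ^ (#X - r) - 1) = #(𝒜 ∪ ℬ.image (X \ ·) ∪ Ioc R' X) := by
        rw [card_union_of_disjoint h₂, card_union_of_disjoint h₁, hcompl, card_Ioc_finset hR'X, hR']
    _ ≤ #X.powerset := card_le_card hsub
    _ = 2 ^ #X := card_powerset X

def CrossSumBound (Y : Finset α) : Prop :=
  ∀ ⦃r s : ℕ⦄ ⦃𝒜 ℬ : Finset (Finset α)⦄, 1 ≤ r → r ≤ s → s ≤ #Y → SizeAtMost Y r 𝒜 →
    SizeAtMost Y s ℬ → 𝒜.Nonempty → ℬ.Nonempty → CrossIntersecting 𝒜 ℬ →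
    #𝒜 + #ℬ ≤ 1 + meetCount #Y r s

theorem CrossSumBound.card_add_card_le_pred (ih : CrossSumBound Y) (hrs : r ≤ s) (hsY : s ≤ #Y)
    (h𝒜 : SizeAtMost Y (r - 1) 𝒜) (hℬ : SizeAtMost Y (s - 1) ℬ) (h𝒜ℬ : CrossIntersecting 𝒜 ℬ)
    (h𝒜card : #𝒜 ≤ meetCount #Y r (s - 1)) (hℬcard : #ℬ ≤ meetCount #Y r (s - 1)) :
    #𝒜 + #ℬ ≤ meetCount #Y r (s - 1) := by
  rcases 𝒜.eq_empty_or_nonempty with rfl | ⟨S, hS⟩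
  · simpa using hℬcard
  rcases ℬ.eq_empty_or_nonempty with rfl | ⟨T, hT⟩
  · simpa using h𝒜card
  have hS₁ := card_pos.2 ((h𝒜ℬ S hS T hT).mono inter_subset_left)
  have hT₁ := card_pos.2 ((h𝒜ℬ S hS T hT).mono inter_subset_right)
  have hSr := (h𝒜 S hS).2
  have hTs := (hℬ T hT).2
  obtain ⟨r, rfl⟩ : ∃ r', r = r' + 1 := ⟨r - 1, by omega⟩
  rw [Nat.add_sub_cancel] at h𝒜 hSr
  calc #𝒜 + #ℬ ≤ 1 + meetCount #Y r (s - 1) :=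
        ih (by omega) (by omega) (by omega) h𝒜 hℬ ⟨S, hS⟩ ⟨T, hT⟩ h𝒜ℬ
    _ ≤ meetCount #Y (r + 1) (s - 1) := by
      rw [add_comm]
      exact meetCount_lt_meetCount_succ (by omega) (by omega)

theorem ShiftStable.card_add_card_le (hx : x ∈ X) (ih : CrossSumBound (X.erase x)) (hr : 1 ≤ r)
    (hrs : r ≤ s) (hsX : s < #X) (h𝒜 : SizeAtMost X r 𝒜) (hℬ : SizeAtMost X s ℬ)
    (h𝒜ne : 𝒜.Nonempty) (hℬne : ℬ.Nonempty) (h𝒜ℬ : CrossIntersecting 𝒜 ℬ)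
    (h𝒜st : ShiftStable X x 𝒜) (hℬst : ShiftStable X x ℬ) :
    #𝒜 + #ℬ ≤ 1 + meetCount #X r s := by
  have hX : #X = #(X.erase x) + 1 := (card_erase_add_one hx).symm
  obtain ⟨R, hR, hRr⟩ := h𝒜st.exists_mem_nonMemberSubfamily h𝒜 h𝒜ne (by omega)
  obtain ⟨T, hT, hTs⟩ := hℬst.exists_mem_nonMemberSubfamily hℬ hℬne hsX
  have hℬ₁ : #(ℬ.memberSubfamily x) ≤ meetCount #(X.erase x) r (s - 1) :=
    (h𝒜ℬ.symm.card_memberSubfamily_le hℬ hR (h𝒜.nonMemberSubfamily x R hR).1).trans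
      (meetCount_mono hRr le_rfl)
  have h𝒜₁ : #(𝒜.memberSubfamily x) ≤ meetCount #(X.erase x) r (s - 1) :=
    (h𝒜ℬ.card_memberSubfamily_le h𝒜 hT (hℬ.nonMemberSubfamily x T hT).1).trans
      (meetCount_pred_le hTs hrs (by omega))
  set P := complementaryPart (X.erase x) x 𝒜 ℬ
  have h₀ : #(𝒜.nonMemberSubfamily x ∪ P) + #(ℬ.nonMemberSubfamily x) ≤
      1 + meetCount #(X.erase x) r s :=
    ih hr hrs (by omega) ((h𝒜.nonMemberSubfamily x).union
        ((h𝒜.memberSubfamily x).mono (Nat.sub_le r 1) (complementaryPart_subset _ x 𝒜 ℬ)))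
      (hℬ.nonMemberSubfamily x) ⟨R, mem_union_left _ hR⟩ ⟨T, hT⟩ (h𝒜ℬ.union_complementaryPart _)
  have h₁ : #(𝒜.memberSubfamily x \ P) + #(ℬ.memberSubfamily x) ≤
      meetCount #(X.erase x) r (s - 1) :=
    ih.card_add_card_le_pred hrs (by omega) ((h𝒜.memberSubfamily x).mono le_rfl sdiff_subset)
      (hℬ.memberSubfamily x) (h𝒜st.crossIntersecting_sdiff_complementaryPart h𝒜ℬ hℬ)
      ((card_le_card sdiff_subset).trans h𝒜₁) hℬ₁
  obtain ⟨s, rfl⟩ : ∃ s', s = s' + 1 := ⟨s - 1, by omega⟩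
  calc #𝒜 + #ℬ ≤ 1 + meetCount #(X.erase x) r (s + 1) + meetCount #(X.erase x) r s := by
        rw [h𝒜ℬ.card_add_card_eq (X.erase x) x]
        exact add_le_add h₀ h₁
    _ = 1 + meetCount #X r (s + 1) := by rw [hX, meetCount_succ_succ (by omega), add_assoc]

theorem crossSumBound (X : Finset α) : CrossSumBound X := by
  induction X using Finset.strongInduction with
  | H X ih =>
  intro r s 𝒜 ℬ hr hrs hsX h𝒜 hℬ h𝒜ne hℬne h𝒜ℬ
  rcases hsX.eq_or_lt with rfl | hsX
  · have := card_add_card_add_le_two_pow hrs h𝒜 (fun T hT ↦ (hℬ T hT).1) h𝒜ne h𝒜ℬ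
    have := Nat.pow_le_pow_right two_pos (Nat.sub_le #X r)
    have := Nat.one_le_two_pow (n := #X - r)
    rw [meetCount_self]
    omega
  obtain ⟨x, hx⟩ : X.Nonempty := card_pos.1 (by omega)
  obtain ⟨𝒜', ℬ', h𝒜', hℬ', h𝒜'r, hℬ's, h𝒜'ℬ', h𝒜'st, hℬ'st⟩ := exists_shiftStable x h𝒜 hℬ h𝒜ℬ
  rw [← h𝒜', ← hℬ']
  exact h𝒜'st.card_add_card_le hx (ih _ (erase_ssubset hx)) hr hrs hsX h𝒜'r hℬ's
    (card_pos.1 (h𝒜' ▸ card_pos.2 h𝒜ne)) (card_pos.1 (hℬ' ▸ card_pos.2 hℬne)) h𝒜'ℬ' hℬ'st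

theorem card_add_card_le (hr : 1 ≤ r) (hrs : r ≤ s) (h𝒜 : SizeAtMost X r 𝒜)
    (hℬ : SizeAtMost X s ℬ) (h𝒜ne : 𝒜.Nonempty) (hℬne : ℬ.Nonempty)
    (h𝒜ℬ : CrossIntersecting 𝒜 ℬ) : #𝒜 + #ℬ ≤ 1 + meetCount #X r s := by
  obtain ⟨S, hS⟩ := h𝒜ne
  obtain ⟨T, hT⟩ := hℬne
  have hX : 0 < #X := card_pos.2 (((h𝒜ℬ S hS T hT).mono inter_subset_left).mono (h𝒜 S hS).1)
  rw [← meetCount_min]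
  exact crossSumBound X (by omega) (min_le_min_right _ hrs) (min_le_right _ _) h𝒜.min_card
    hℬ.min_card ⟨S, hS⟩ ⟨T, hT⟩ h𝒜ℬ

end BorgFeghali

theorem borg_feghali_main_general (n r s : ℕ) (hr : 1 ≤ r) (hrs : r ≤ s)
    (𝒜 ℬ : Finset (Finset ℕ))
    (h𝒜 : ∀ A ∈ 𝒜, A ⊆ Finset.Icc 1 n ∧ A.card ≤ r)
    (hℬ : ∀ B ∈ ℬ, B ⊆ Finset.Icc 1 n ∧ B.card ≤ s)
    (h𝒜ne : 𝒜.Nonempty) (hℬne : ℬ.Nonempty)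
    (hcross : ∀ A ∈ 𝒜, ∀ B ∈ ℬ, (A ∩ B).Nonempty) :
    𝒜.card + ℬ.card ≤ 1 + ∑ i ∈ Finset.Icc 1 s, (n.choose i - (n - r).choose i) := by
  simpa [BorgFeghali.meetCount] using
    BorgFeghali.card_add_card_le hr hrs h𝒜 hℬ h𝒜ne hℬne hcross

theorem borg_feghali_main (n r s : ℕ) (hn : 1 ≤ n) (hr : 1 ≤ r) (hrs : r ≤ s)
    (𝒜 ℬ : Finset (Finset ℕ))
    (h𝒜 : ∀ A ∈ 𝒜, A ⊆ Finset.Icc 1 n ∧ A.card ≤ r)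
    (hℬ : ∀ B ∈ ℬ, B ⊆ Finset.Icc 1 n ∧ B.card ≤ s)
    (h𝒜ne : 𝒜.Nonempty) (hℬne : ℬ.Nonempty)
    (hcross : ∀ A ∈ 𝒜, ∀ B ∈ ℬ, (A ∩ B).Nonempty) :
    𝒜.card + ℬ.card ≤ 1 + ∑ i ∈ Finset.Icc 1 s, (n.choose i - (n - r).choose i) :=
  borg_feghali_main_general n r s hr hrs 𝒜 ℬ h𝒜 hℬ h𝒜ne hℬne hcross
end

section
/- Let A and B be compressed cross-intersecting families of subsets of [n] with n ≥ 2. Let A₁ = {A \ {n} : n ∈ A ∈ A} and B₁ = {B \ {n} : n ∈ B ∈ B}. If C ∈ A₁ and some member of B₁ is disjoint from C, then [n−1] \ C is the unique member of B₁ disjoint from C. -/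
/-!
Write `C = A \ {n}` and `B₁ = B \ {n}` with `n ∈ A ∈ 𝒜`, `n ∈ B ∈ ℬ` and `B₁ ∩ C = ∅`. Clearly
`B₁ ⊆ [n-1] \ C`. Conversely, if some `x ∈ [n-1] \ C` were missing from `B`, compressing `ℬ`
would shift `n` down to `x`, producing `B₁ ∪ {x} ∈ ℬ`, which is disjoint from `A = C ∪ {n}`.
-/

open Finset

def Compressed (n : ℕ) (F : Finset (Finset ℕ)) : Prop :=
  ∀ S ∈ F, ∀ i ∈ Finset.Icc 1 n, ∀ j ∈ Finset.Icc 1 n,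
    i < j → j ∈ S → i ∉ S → insert i (S.erase j) ∈ F

variable {n : ℕ} {ℬ : Finset (Finset ℕ)} {B C : Finset ℕ}

theorem Compressed.insert_erase_top_mem (hℬ : Compressed n ℬ) (hB : B ∈ ℬ) (hnB : n ∈ B)
    {x : ℕ} (hx : x ∈ Icc 1 (n - 1)) (hxB : x ∉ B) : insert x (B.erase n) ∈ ℬ := by
  rw [mem_Icc] at hx
  exact hℬ B hB x (mem_Icc.2 ⟨hx.1, by omega⟩) n (mem_Icc.2 ⟨by omega, le_rfl⟩) (by omega) hnB hxB

theorem erase_top_subset_Icc_sdiff (hB : B ⊆ Icc 1 n) (hBC : Disjoint (B.erase n) C) :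
    B.erase n ⊆ Icc 1 (n - 1) \ C := by
  refine subset_sdiff.2 ⟨fun x hx => ?_, hBC⟩
  obtain ⟨hxn, hxB⟩ := mem_erase.1 hx
  have := mem_Icc.1 (hB hxB)
  exact mem_Icc.2 ⟨this.1, by omega⟩

theorem Compressed.Icc_sdiff_subset_erase_top (hℬ : Compressed n ℬ)
    (hcross : ∀ B' ∈ ℬ, (insert n C ∩ B').Nonempty) (hB : B ∈ ℬ) (hnB : n ∈ B)
    (hBC : Disjoint (B.erase n) C) : Icc 1 (n - 1) \ C ⊆ B.erase n := by
  intro x hx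
  obtain ⟨hxI, hxC⟩ := mem_sdiff.1 hx
  by_contra hxB
  have hxn : x ≠ n := by have := mem_Icc.1 hxI; omega
  have hshift := hℬ.insert_erase_top_mem hB hnB hxI fun h => hxB (mem_erase.2 ⟨hxn, h⟩)
  have hdisj : Disjoint (insert n C) (insert x (B.erase n)) := by
    rw [disjoint_insert_left, disjoint_insert_right, mem_insert, mem_erase]
    exact ⟨fun h => h.elim (fun h => hxn h.symm) fun h => h.1 rfl, hxC, hBC.symm⟩
  exact not_disjoint_iff_nonempty_inter.2 (hcross _ hshift) hdisj

theorem Compressed.erase_top_eq_Icc_sdiff (hℬ : Compressed n ℬ)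
    (hℬn : ℬ ⊆ (Icc 1 n).powerset) (hcross : ∀ B' ∈ ℬ, (insert n C ∩ B').Nonempty)
    (hB : B ∈ ℬ) (hnB : n ∈ B) (hBC : Disjoint (B.erase n) C) :
    B.erase n = Icc 1 (n - 1) \ C :=
  (erase_top_subset_Icc_sdiff (mem_powerset.1 (hℬn hB)) hBC).antisymm
    (hℬ.Icc_sdiff_subset_erase_top hcross hB hnB hBC)

theorem unique_disjoint_set_general (n : ℕ)
    (𝒜 ℬ : Finset (Finset ℕ))
    (hℬ : ℬ ⊆ (Finset.Icc 1 n).powerset)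
    (hℬc : Compressed n ℬ)
    (hcross : ∀ A ∈ 𝒜, ∀ B ∈ ℬ, (A ∩ B).Nonempty)
    (C : Finset ℕ)
    (hC : C ∈ (𝒜.filter (fun A => n ∈ A)).image (fun A => A.erase n))
    (hdisj : ∃ B ∈ (ℬ.filter (fun B => n ∈ B)).image (fun B => B.erase n),
      B ∩ C = ∅) :
    (Finset.Icc 1 (n - 1)) \ C ∈
        (ℬ.filter (fun B => n ∈ B)).image (fun B => B.erase n) ∧
    ∀ B ∈ (ℬ.filter (fun B => n ∈ B)).image (fun B => B.erase n),
      B ∩ C = ∅ → B = (Finset.Icc 1 (n - 1)) \ C := by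
  obtain ⟨A, hAf, rfl⟩ := mem_image.1 hC
  obtain ⟨hA, hnA⟩ := mem_filter.1 hAf
  have hcrossA : ∀ B ∈ ℬ, (insert n (A.erase n) ∩ B).Nonempty := by
    rw [insert_erase hnA]
    exact hcross A hA
  have key : ∀ B ∈ (ℬ.filter (fun B => n ∈ B)).image (fun B => B.erase n),
      B ∩ A.erase n = ∅ → B = Icc 1 (n - 1) \ A.erase n := by
    rintro _ hB hBC
    obtain ⟨B, hBf, rfl⟩ := mem_image.1 hB
    obtain ⟨hBℬ, hnB⟩ := mem_filter.1 hBf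
    exact hℬc.erase_top_eq_Icc_sdiff hℬ hcrossA hBℬ hnB (disjoint_iff_inter_eq_empty.2 hBC)
  obtain ⟨B, hB, hBC⟩ := hdisj
  exact ⟨key B hB hBC ▸ hB, key⟩

theorem unique_disjoint_set (n : ℕ) (hn : 2 ≤ n)
    (𝒜 ℬ : Finset (Finset ℕ))
    (h𝒜 : 𝒜 ⊆ (Finset.Icc 1 n).powerset) (hℬ : ℬ ⊆ (Finset.Icc 1 n).powerset)
    (h𝒜c : Compressed n 𝒜) (hℬc : Compressed n ℬ)
    (hcross : ∀ A ∈ 𝒜, ∀ B ∈ ℬ, (A ∩ B).Nonempty)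
    (C : Finset ℕ)
    (hC : C ∈ (𝒜.filter (fun A => n ∈ A)).image (fun A => A.erase n))
    (hdisj : ∃ B ∈ (ℬ.filter (fun B => n ∈ B)).image (fun B => B.erase n),
      B ∩ C = ∅) :
    (Finset.Icc 1 (n - 1)) \ C ∈
        (ℬ.filter (fun B => n ∈ B)).image (fun B => B.erase n) ∧
    ∀ B ∈ (ℬ.filter (fun B => n ∈ B)).image (fun B => B.erase n),
      B ∩ C = ∅ → B = (Finset.Icc 1 (n - 1)) \ C :=
  unique_disjoint_set_general n 𝒜 ℬ hℬ hℬc hcross C hC hdisj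
end

section
/- Let A and B be compressed cross-intersecting families of subsets of [n] with n ≥ 2. Let A₁ = {A \ {n} : n ∈ A ∈ A}, B₀ = {B ∈ B : n ∉ B}, B₁ = {B \ {n} : n ∈ B ∈ B}, and C = {A ∈ A₁ : A ∩ B = ∅ for some B ∈ B₁}. Then for every C ∈ C, the set [n−1] \ C is not in B₀; in particular B₀ and {[n−1] \ C : C ∈ C} are disjoint. -/
/-! If `n ∈ A ∈ 𝒜`, then `A` can meet `[n-1] \ (A \ {n})` only in `n`, which lies outside `[n-1]`;
so this set is disjoint from `A` and, by cross-intersection, cannot belong to `ℬ`. -/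

open Finset

theorem Finset.disjoint_sdiff_erase {α : Type*} [DecidableEq α] {A s : Finset α} {a : α}
    (ha : a ∉ s) : Disjoint A (s \ A.erase a) := by
  refine disjoint_left.2 fun x hxA hx => ?_
  obtain ⟨hxs, hxA'⟩ := mem_sdiff.1 hx
  obtain rfl : x = a := by simpa [hxA] using hxA'
  exact ha hxs

theorem Icc_sdiff_erase_notMem_of_crossIntersecting {n : ℕ} {𝒜 ℬ : Finset (Finset ℕ)}
    (hcross : ∀ A ∈ 𝒜, ∀ B ∈ ℬ, (A ∩ B).Nonempty) {A : Finset ℕ} (hA : A ∈ 𝒜) :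
    Icc 1 (n - 1) \ A.erase n ∉ ℬ := fun hB =>
  (hcross A hA _ hB).ne_empty <| disjoint_iff_inter_eq_empty.1 <|
    disjoint_sdiff_erase <| by simp only [mem_Icc]; omega

theorem complement_not_in_B0_general (n : ℕ)
    (𝒜 ℬ : Finset (Finset ℕ))
    (hcross : ∀ A ∈ 𝒜, ∀ B ∈ ℬ, (A ∩ B).Nonempty) :
    (∀ C ∈ ((𝒜.filter (fun A => n ∈ A)).image (fun A => A.erase n)).filter
        (fun A => ∃ B ∈ (ℬ.filter (fun B => n ∈ B)).image (fun B => B.erase n),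
          A ∩ B = ∅),
      (Finset.Icc 1 (n - 1)) \ C ∉ ℬ.filter (fun B => n ∉ B)) ∧
    Disjoint (ℬ.filter (fun B => n ∉ B))
      ((((𝒜.filter (fun A => n ∈ A)).image (fun A => A.erase n)).filter
        (fun A => ∃ B ∈ (ℬ.filter (fun B => n ∈ B)).image (fun B => B.erase n),
          A ∩ B = ∅)).image (fun C => (Finset.Icc 1 (n - 1)) \ C)) := by
  suffices key : ∀ C ∈ (𝒜.filter (n ∈ ·)).image (·.erase n), Icc 1 (n - 1) \ C ∉ ℬ by
    refine ⟨fun C hC hB => key C (mem_filter.1 hC).1 (mem_filter.1 hB).1, disjoint_right.2 ?_⟩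
    intro _ hD hB
    obtain ⟨C, hC, rfl⟩ := mem_image.1 hD
    exact key C (mem_filter.1 hC).1 (mem_filter.1 hB).1
  intro C hC
  obtain ⟨A, hA, rfl⟩ := mem_image.1 hC
  exact Icc_sdiff_erase_notMem_of_crossIntersecting hcross (mem_filter.1 hA).1

theorem complement_not_in_B0 (n : ℕ) (hn : 2 ≤ n)
    (𝒜 ℬ : Finset (Finset ℕ))
    (h𝒜 : 𝒜 ⊆ (Finset.Icc 1 n).powerset) (hℬ : ℬ ⊆ (Finset.Icc 1 n).powerset)
    (h𝒜c : Compressed n 𝒜) (hℬc : Compressed n ℬ)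
    (hcross : ∀ A ∈ 𝒜, ∀ B ∈ ℬ, (A ∩ B).Nonempty) :
    (∀ C ∈ ((𝒜.filter (fun A => n ∈ A)).image (fun A => A.erase n)).filter
        (fun A => ∃ B ∈ (ℬ.filter (fun B => n ∈ B)).image (fun B => B.erase n),
          A ∩ B = ∅),
      (Finset.Icc 1 (n - 1)) \ C ∉ ℬ.filter (fun B => n ∉ B)) ∧
    Disjoint (ℬ.filter (fun B => n ∉ B))
      ((((𝒜.filter (fun A => n ∈ A)).image (fun A => A.erase n)).filter
        (fun A => ∃ B ∈ (ℬ.filter (fun B => n ∈ B)).image (fun B => B.erase n),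
          A ∩ B = ∅)).image (fun C => (Finset.Icc 1 (n - 1)) \ C)) :=
  complement_not_in_B0_general n 𝒜 ℬ hcross
end

section
/- (Frankl–Tokushige) Let 1 ≤ r ≤ s and n ≥ r + s. If A ⊆ ([n] choose r) and B ⊆ ([n] choose s) are non-empty and cross-intersecting, then |A| + |B| ≤ 1 + C(n,s) − C(n−r,s). -/
/-!
Compressing both families by the same UV-compression `j ↦ i` (`i < j`) keeps them uniform,
cross-intersecting and of the same sizes while lowering the total sum of their elements, so we may
assume both are shifted; then `[r] ∈ 𝒜` and `[s] ∈ ℬ`. When `n = r + s`, the complements of the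
members of `ℬ` are `r`-sets outside `𝒜`, whence `|𝒜| + |ℬ| ≤ C(n, r)`. Otherwise split both
families according to whether their members contain `n` and induct on `n`: the parts avoiding `n`
are cross-intersecting, the links of `ℬ` at `n` all meet `[r]`, and shiftedness lets `n` be moved
to an element missed by both links, so the two links cross-intersect as well. Pascal's rule
assembles the bounds.
-/

open Finset
open scoped FinsetFamily

theorem Nat.choose_le_choose_of_le_of_add_le {m a b : ℕ} (hab : a ≤ b) (h : a + b ≤ m) :
    m.choose a ≤ m.choose b := by
  have mono : ∀ c, a ≤ c → c ≤ m / 2 → m.choose a ≤ m.choose c := by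
    intro c hac hc
    induction c, hac using Nat.le_induction with
    | base => rfl
    | succ c _ ih => exact (ih (by omega)).trans (Nat.choose_le_succ_of_lt_half_left (by omega))
  rcases le_or_gt b (m / 2) with hb | hb
  · exact mono b hab hb
  · rw [← Nat.choose_symm (by omega : b ≤ m)]
    exact mono (m - b) (by omega) (by omega)

namespace FranklTokushige

section General

variable {α : Type*} [DecidableEq α] {𝒜 ℬ 𝒜' ℬ' : Finset (Finset α)} {X : Finset α} {r s : ℕ}

def CrossIntersecting (𝒜 ℬ : Finset (Finset α)) : Prop :=
  ∀ A ∈ 𝒜, ∀ B ∈ ℬ, (A ∩ B).Nonempty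

namespace CrossIntersecting

theorem symm (h : CrossIntersecting 𝒜 ℬ) : CrossIntersecting ℬ 𝒜 :=
  fun B hB A hA => inter_comm A B ▸ h A hA B hB

theorem mono (h : CrossIntersecting 𝒜 ℬ) (h𝒜 : 𝒜' ⊆ 𝒜) (hℬ : ℬ' ⊆ ℬ) :
    CrossIntersecting 𝒜' ℬ' :=
  fun A hA B hB => h A (h𝒜 hA) B (hℬ hB)

theorem nonempty_of_mem_left (h : CrossIntersecting 𝒜 ℬ) {A : Finset α} (hA : A ∈ 𝒜)
    (hℬ : ℬ.Nonempty) : A.Nonempty :=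
  let ⟨B, hB⟩ := hℬ
  (h A hA B hB).mono inter_subset_left

theorem memberSubfamily_nonMemberSubfamily (h : CrossIntersecting 𝒜 ℬ) (a : α) :
    CrossIntersecting (𝒜.memberSubfamily a) (ℬ.nonMemberSubfamily a) := by
  intro A hA B hB
  rw [mem_memberSubfamily] at hA
  rw [mem_nonMemberSubfamily] at hB
  obtain ⟨x, hx⟩ := h _ hA.1 B hB.1
  rw [mem_inter, mem_insert] at hx
  obtain ⟨rfl | hxA, hxB⟩ := hx
  · exact absurd hxB hB.2
  · exact ⟨x, mem_inter.2 ⟨hxA, hxB⟩⟩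

end CrossIntersecting

theorem nonMemberSubfamily_subset_powersetCard (h : 𝒜 ⊆ X.powersetCard r) (a : α) :
    𝒜.nonMemberSubfamily a ⊆ (X.erase a).powersetCard r := by
  intro A hA
  rw [mem_nonMemberSubfamily] at hA
  obtain ⟨hAX, hAr⟩ := mem_powersetCard.1 (h hA.1)
  exact mem_powersetCard.2 ⟨subset_erase.2 ⟨hAX, hA.2⟩, hAr⟩

theorem memberSubfamily_subset_powersetCard (h : 𝒜 ⊆ X.powersetCard r) (a : α) :
    𝒜.memberSubfamily a ⊆ (X.erase a).powersetCard (r - 1) := by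
  intro A hA
  rw [mem_memberSubfamily] at hA
  obtain ⟨hAX, hAr⟩ := mem_powersetCard.1 (h hA.1)
  rw [card_insert_of_notMem hA.2] at hAr
  exact mem_powersetCard.2 ⟨subset_erase.2 ⟨(subset_insert _ _).trans hAX, hA.2⟩, by omega⟩

theorem card_add_choose_card_sub_le {ℱ : Finset (Finset α)} {C : Finset α} {t : ℕ} (hC : C ⊆ X)
    (hℱ : ℱ ⊆ X.powersetCard t) (hmeet : ∀ F ∈ ℱ, (C ∩ F).Nonempty) :
    #ℱ + (#X - #C).choose t ≤ (#X).choose t := by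
  have hdisj : Disjoint ℱ ((X \ C).powersetCard t) := by
    refine disjoint_left.2 fun F hF hF' => ?_
    obtain ⟨x, hx⟩ := hmeet F hF
    rw [mem_inter] at hx
    exact (mem_sdiff.1 ((mem_powersetCard.1 hF').1 hx.2)).2 hx.1
  have hsub : ℱ ∪ (X \ C).powersetCard t ⊆ X.powersetCard t :=
    union_subset hℱ (powersetCard_mono sdiff_subset)
  simpa [card_union_of_disjoint hdisj, card_sdiff_of_subset hC] using card_le_card hsub

theorem card_add_card_le_choose (hX : #X = r + s) (h𝒜 : 𝒜 ⊆ X.powersetCard r)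
    (hℬ : ℬ ⊆ X.powersetCard s) (hcross : CrossIntersecting 𝒜 ℬ) :
    #𝒜 + #ℬ ≤ (#X).choose r := by
  have hcompl : ∀ B ∈ ℬ, X \ (X \ B) = B := fun B hB =>
    Finset.sdiff_sdiff_eq_self (mem_powersetCard.1 (hℬ hB)).1
  have hinj : Set.InjOn (X \ ·) ℬ := fun B hB B' hB' hBB' => by
    rw [← hcompl B hB, ← hcompl B' hB']
    exact congrArg (X \ ·) hBB'
  have hdisj : Disjoint 𝒜 (ℬ.image (X \ ·)) := by
    refine disjoint_left.2 fun A hA hA' => ?_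
    obtain ⟨B, hB, rfl⟩ := mem_image.1 hA'
    obtain ⟨x, hx⟩ := hcross _ hA B hB
    rw [mem_inter, mem_sdiff] at hx
    exact hx.1.2 hx.2
  have hsub : 𝒜 ∪ ℬ.image (X \ ·) ⊆ X.powersetCard r := by
    refine union_subset h𝒜 fun A hA => ?_
    obtain ⟨B, hB, rfl⟩ := mem_image.1 hA
    obtain ⟨hBX, hBs⟩ := mem_powersetCard.1 (hℬ hB)
    exact mem_powersetCard.2 ⟨sdiff_subset, by rw [card_sdiff_of_subset hBX]; omega⟩
  have := card_le_card hsub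
  rwa [card_union_of_disjoint hdisj, card_image_of_injOn hinj, card_powersetCard] at this

theorem sum_erase_insert_add {M : Type*} [AddCommMonoid M] (f : α → M) {i j : α} {A : Finset α}
    (hi : i ∉ A) (hj : j ∈ A) : ∑ x ∈ (insert i A).erase j, f x + f j = ∑ x ∈ A, f x + f i := by
  rw [sum_erase_add _ _ (mem_insert_of_mem hj), sum_insert hi, add_comm]

theorem compress_singleton (i j : α) (A : Finset α) :
    UV.compress {i} {j} A = if i ∉ A ∧ j ∈ A then (insert i A).erase j else A := by
  simp [UV.compress, sdiff_singleton_eq_erase]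

theorem compression_subset_powersetCard {i : α} (hi : i ∈ X) (j : α)
    (h : 𝒜 ⊆ X.powersetCard r) : 𝓒 {i} {j} 𝒜 ⊆ X.powersetCard r := by
  intro A hA
  rcases UV.mem_compression.1 hA with ⟨hA, -⟩ | ⟨-, B, hB, rfl⟩
  · exact h hA
  obtain ⟨hBX, hBr⟩ := mem_powersetCard.1 (h hB)
  rw [compress_singleton]
  split_ifs with hij
  · refine mem_powersetCard.2 ⟨(erase_subset _ _).trans (insert_subset hi hBX), ?_⟩
    rw [card_erase_of_mem (mem_insert_of_mem hij.2), card_insert_of_notMem hij.1]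
    omega
  · exact h hB

theorem CrossIntersecting.inter_compress_nonempty (h : CrossIntersecting 𝒜 ℬ) {i j : α}
    {A B : Finset α} (hA : A ∈ 𝒜) (hA' : UV.compress {i} {j} A ∈ 𝒜) (hB : B ∈ ℬ) :
    (A ∩ UV.compress {i} {j} B).Nonempty := by
  rw [compress_singleton]
  split_ifs with hiB
  · obtain ⟨y, hy⟩ := h A hA B hB
    rw [mem_inter] at hy
    by_cases hyj : y = j
    · rw [hyj] at hy
      by_cases hiA : i ∈ A
      · have hij : i ≠ j := fun hij => hiB.1 (hij ▸ hy.2)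
        exact ⟨i, mem_inter.2 ⟨hiA, mem_erase.2 ⟨hij, mem_insert_self _ _⟩⟩⟩
      -- `j` leaves `B`, but `B` meets the compression of `A`, which lies in `𝒜`.
      rw [compress_singleton, if_pos ⟨hiA, hy.1⟩] at hA'
      obtain ⟨z, hz⟩ := h _ hA' B hB
      rw [mem_inter, mem_erase, mem_insert] at hz
      obtain ⟨⟨hzy, rfl | hzA⟩, hzB⟩ := hz
      · exact absurd hzB hiB.1
      · exact ⟨z, mem_inter.2 ⟨hzA, mem_erase.2 ⟨hzy, mem_insert_of_mem hzB⟩⟩⟩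
    · exact ⟨y, mem_inter.2 ⟨hy.1, mem_erase.2 ⟨hyj, mem_insert_of_mem hy.2⟩⟩⟩
  · exact h A hA B hB

theorem CrossIntersecting.compression (h : CrossIntersecting 𝒜 ℬ) (i j : α) :
    CrossIntersecting (𝓒 {i} {j} 𝒜) (𝓒 {i} {j} ℬ) := by
  intro A hA B hB
  rcases UV.mem_compression.1 hA with ⟨hA, hA'⟩ | ⟨hA, a, ha, rfl⟩ <;>
    rcases UV.mem_compression.1 hB with ⟨hB, hB'⟩ | ⟨hB, b, hb, rfl⟩
  · exact h A hA B hB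
  · exact h.inter_compress_nonempty hA hA' hb
  · exact inter_comm B _ ▸ h.symm.inter_compress_nonempty hB hB' ha
  · have hiA := UV.le_of_mem_compression_of_notMem (UV.compress_mem_compression ha) hA
    have hiB := UV.le_of_mem_compression_of_notMem (UV.compress_mem_compression hb) hB
    exact ⟨i, mem_inter.2 ⟨singleton_subset_iff.1 hiA, singleton_subset_iff.1 hiB⟩⟩

end General

def Shifted (X : Finset ℕ) (𝒜 : Finset (Finset ℕ)) : Prop :=
  ∀ A ∈ 𝒜, ∀ i ∈ X, ∀ j, i < j → i ∉ A → j ∈ A → (insert i A).erase j ∈ 𝒜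

def weight (𝒜 : Finset (Finset ℕ)) : ℕ :=
  ∑ A ∈ 𝒜, ∑ a ∈ A, a

theorem weight_compression_add {i j : ℕ} (hij : i ≤ j) (𝒜 : Finset (Finset ℕ)) :
    weight (𝓒 {i} {j} 𝒜) + #{A ∈ 𝒜 | UV.compress {i} {j} A ∉ 𝒜} * (j - i) = weight 𝒜 := by
  rw [weight, weight, UV.compression, sum_union UV.compress_disjoint, filter_image,
    sum_image UV.compress_injOn, ← filter_union_filter_not_eq (UV.compress {i} {j} · ∈ 𝒜) 𝒜,
    sum_union (disjoint_filter_filter_not _ _ _), filter_union_filter_not_eq, ← smul_eq_mul,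
    ← sum_const, add_assoc, ← sum_add_distrib]
  congr 1
  refine sum_congr rfl fun A hA => ?_
  obtain ⟨hA, hA'⟩ := mem_filter.1 hA
  rw [compress_singleton] at hA' ⊢
  split_ifs at hA' ⊢ with hc
  · have := sum_erase_insert_add (fun a => a) hc.1 hc.2
    omega
  · exact absurd hA hA'

theorem exists_moved_of_not_shifted {X : Finset ℕ} {𝒜 : Finset (Finset ℕ)} (h : ¬Shifted X 𝒜) :
    ∃ i ∈ X, ∃ j, i < j ∧ {A ∈ 𝒜 | UV.compress {i} {j} A ∉ 𝒜}.Nonempty := by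
  simp only [Shifted, not_forall] at h
  obtain ⟨A, hA, i, hi, j, hij, hiA, hjA, hA'⟩ := h
  refine ⟨i, hi, j, hij, A, mem_filter.2 ⟨hA, ?_⟩⟩
  rwa [compress_singleton, if_pos ⟨hiA, hjA⟩]

theorem exists_shifted (X : Finset ℕ) {r s : ℕ} (𝒜 ℬ : Finset (Finset ℕ))
    (h𝒜 : 𝒜 ⊆ X.powersetCard r) (hℬ : ℬ ⊆ X.powersetCard s) (hcross : CrossIntersecting 𝒜 ℬ) :
    ∃ 𝒜' ℬ' : Finset (Finset ℕ), 𝒜' ⊆ X.powersetCard r ∧ ℬ' ⊆ X.powersetCard s ∧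
      #𝒜' = #𝒜 ∧ #ℬ' = #ℬ ∧ CrossIntersecting 𝒜' ℬ' ∧ Shifted X 𝒜' ∧ Shifted X ℬ' := by
  by_cases hsh : Shifted X 𝒜 ∧ Shifted X ℬ
  · exact ⟨𝒜, ℬ, h𝒜, hℬ, rfl, rfl, hcross, hsh⟩
  obtain ⟨i, hi, j, hij, hmoved⟩ : ∃ i ∈ X, ∃ j, i < j ∧
      ({A ∈ 𝒜 | UV.compress {i} {j} A ∉ 𝒜}.Nonempty ∨
        {B ∈ ℬ | UV.compress {i} {j} B ∉ ℬ}.Nonempty) := by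
    rcases not_and_or.1 hsh with h | h <;>
      obtain ⟨i, hi, j, hij, hne⟩ := exists_moved_of_not_shifted h
    exacts [⟨i, hi, j, hij, .inl hne⟩, ⟨i, hi, j, hij, .inr hne⟩]
  have h𝒜w := weight_compression_add hij.le 𝒜
  have hℬw := weight_compression_add hij.le ℬ
  have hdec : weight (𝓒 {i} {j} 𝒜) + weight (𝓒 {i} {j} ℬ) < weight 𝒜 + weight ℬ := by
    rcases hmoved with h | h <;> have := Nat.mul_pos (card_pos.2 h) (Nat.sub_pos_of_lt hij) <;>
      omega
  obtain ⟨𝒜', ℬ', h𝒜', hℬ', hcard𝒜, hcardℬ, hrest⟩ :=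
    exists_shifted X (𝓒 {i} {j} 𝒜) (𝓒 {i} {j} ℬ) (compression_subset_powersetCard hi j h𝒜)
      (compression_subset_powersetCard hi j hℬ) (hcross.compression i j)
  exact ⟨𝒜', ℬ', h𝒜', hℬ', hcard𝒜.trans (UV.card_compression _ _ _),
    hcardℬ.trans (UV.card_compression _ _ _), hrest⟩
termination_by weight 𝒜 + weight ℬ

theorem Shifted.Icc_mem {n r : ℕ} {𝒜 : Finset (Finset ℕ)} (hsh : Shifted (Icc 1 n) 𝒜)
    (h𝒜 : 𝒜 ⊆ (Icc 1 n).powersetCard r) (hne : 𝒜.Nonempty) : Icc 1 r ∈ 𝒜 := by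
  obtain ⟨A, hA, hmin⟩ := exists_min_image 𝒜 (fun A => ∑ a ∈ A, a) hne
  obtain ⟨hAn, hAr⟩ := mem_powersetCard.1 (h𝒜 hA)
  by_contra hr
  have hcard : #(Icc 1 r) = #A := by simp [hAr]
  obtain ⟨i, hi, hiA⟩ := not_subset.1 fun hsub => hr (eq_of_subset_of_card_le hsub hcard.ge ▸ hA)
  obtain ⟨j, hjA, hj⟩ := not_subset.1 fun hsub => hr (eq_of_subset_of_card_le hsub hcard.le ▸ hA)
  have hjn := mem_Icc.1 (hAn hjA)
  rw [mem_Icc] at hi hj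
  have hshift := hmin _ (hsh A hA i (mem_Icc.2 ⟨hi.1, by omega⟩) j (by omega) hiA hjA)
  have := sum_erase_insert_add (fun a => a) hiA hjA
  omega

theorem Shifted.crossIntersecting_memberSubfamily {m r s : ℕ} {𝒜 ℬ : Finset (Finset ℕ)}
    (hsh : Shifted (Icc 1 (m + 1)) 𝒜) (h𝒜 : 𝒜 ⊆ (Icc 1 (m + 1)).powersetCard r)
    (hℬ : ℬ ⊆ (Icc 1 (m + 1)).powersetCard s) (hrs : r + s ≤ m + 1)
    (hcross : CrossIntersecting 𝒜 ℬ) :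
    CrossIntersecting (𝒜.memberSubfamily (m + 1)) (ℬ.memberSubfamily (m + 1)) := by
  intro A hA B hB
  rw [mem_memberSubfamily] at hA hB
  have hr := (mem_powersetCard.1 (h𝒜 hA.1)).2
  have hs := (mem_powersetCard.1 (hℬ hB.1)).2
  rw [card_insert_of_notMem hA.2] at hr
  rw [card_insert_of_notMem hB.2] at hs
  -- `A ∪ B` has at most `r + s - 2 < m` elements, so some `j ≤ m` lies outside it.
  obtain ⟨j, hj, hjAB⟩ := exists_mem_notMem_of_card_lt_card (s := A ∪ B) (t := Icc 1 m)
    (by have := card_union_le A B; simp; omega)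
  rw [mem_union, not_or] at hjAB
  have hjm := mem_Icc.1 hj
  have hshift := hsh _ hA.1 j (mem_Icc.2 ⟨hjm.1, by omega⟩) (m + 1) (by omega)
    (by simp [hjAB.1]; omega) (mem_insert_self _ _)
  rw [erase_insert_of_ne (by omega), erase_insert hA.2] at hshift
  obtain ⟨y, hy⟩ := hcross _ hshift _ hB.1
  simp only [mem_inter, mem_insert] at hy
  obtain ⟨rfl | hyA, rfl | hyB⟩ := hy
  · omega
  · exact absurd hyB hjAB.2
  · exact absurd hyA hA.2
  · exact ⟨y, mem_inter.2 ⟨hyA, hyB⟩⟩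

/-- `C(n - r, s)` sits on the left so that no truncated subtraction occurs. -/
def BoundAt (n : ℕ) : Prop :=
  ∀ r s (𝒜 ℬ : Finset (Finset ℕ)), r ≤ s → r + s ≤ n → 𝒜 ⊆ (Icc 1 n).powersetCard r →
    ℬ ⊆ (Icc 1 n).powersetCard s → 𝒜.Nonempty → ℬ.Nonempty → CrossIntersecting 𝒜 ℬ →
    #𝒜 + #ℬ + (n - r).choose s ≤ 1 + n.choose s

theorem bound_of_add_eq {n r s : ℕ} {𝒜 ℬ : Finset (Finset ℕ)} (hn : r + s = n)
    (h𝒜 : 𝒜 ⊆ (Icc 1 n).powersetCard r) (hℬ : ℬ ⊆ (Icc 1 n).powersetCard s)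
    (hcross : CrossIntersecting 𝒜 ℬ) :
    #𝒜 + #ℬ + (n - r).choose s ≤ 1 + n.choose s := by
  have h := card_add_card_le_choose (by simp; omega) h𝒜 hℬ hcross
  rw [Nat.card_Icc, Nat.add_sub_cancel, ← hn, Nat.choose_symm_add] at h
  rw [← hn, Nat.add_sub_cancel_left, Nat.choose_self]
  omega

section Step

variable {m r s : ℕ} {𝒜 ℬ : Finset (Finset ℕ)}

theorem Icc_one_erase_succ (m : ℕ) : (Icc 1 (m + 1)).erase (m + 1) = Icc 1 m := by
  rw [Icc_erase_right, Ico_add_one_right_eq_Icc]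

theorem nonMemberSubfamily_subset_Icc (h𝒜 : 𝒜 ⊆ (Icc 1 (m + 1)).powersetCard r) :
    𝒜.nonMemberSubfamily (m + 1) ⊆ (Icc 1 m).powersetCard r :=
  Icc_one_erase_succ m ▸ nonMemberSubfamily_subset_powersetCard h𝒜 (m + 1)

theorem memberSubfamily_subset_Icc (h𝒜 : 𝒜 ⊆ (Icc 1 (m + 1)).powersetCard r) :
    𝒜.memberSubfamily (m + 1) ⊆ (Icc 1 m).powersetCard (r - 1) :=
  Icc_one_erase_succ m ▸ memberSubfamily_subset_powersetCard h𝒜 (m + 1)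

theorem BoundAt.nonMemberSubfamily (ih : BoundAt m) (hrs : r ≤ s) (hm : r + s ≤ m)
    (h𝒜 : 𝒜 ⊆ (Icc 1 (m + 1)).powersetCard r) (hℬ : ℬ ⊆ (Icc 1 (m + 1)).powersetCard s)
    (hcross : CrossIntersecting 𝒜 ℬ) (hr𝒜 : Icc 1 r ∈ 𝒜.nonMemberSubfamily (m + 1))
    (hsℬ : Icc 1 s ∈ ℬ.nonMemberSubfamily (m + 1)) :
    #(𝒜.nonMemberSubfamily (m + 1)) + #(ℬ.nonMemberSubfamily (m + 1)) + (m - r).choose s ≤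
      1 + m.choose s :=
  ih r s _ _ hrs hm (nonMemberSubfamily_subset_Icc h𝒜) (nonMemberSubfamily_subset_Icc hℬ)
    ⟨_, hr𝒜⟩ ⟨_, hsℬ⟩ (hcross.mono (filter_subset _ _) (filter_subset _ _))

theorem card_memberSubfamily_add_choose_le (hm : r ≤ m)
    (hℬ : ℬ ⊆ (Icc 1 (m + 1)).powersetCard s) (hcross : CrossIntersecting 𝒜 ℬ)
    (hr𝒜 : Icc 1 r ∈ 𝒜.nonMemberSubfamily (m + 1)) :
    #(ℬ.memberSubfamily (m + 1)) + (m - r).choose (s - 1) ≤ m.choose (s - 1) := by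
  have h := card_add_choose_card_sub_le (Icc_subset_Icc_right hm) (memberSubfamily_subset_Icc hℬ)
    ((hcross.symm.memberSubfamily_nonMemberSubfamily (m + 1)).symm _ hr𝒜)
  simpa using h

theorem BoundAt.succ_of_memberSubfamily_eq_empty (ih : BoundAt m) (hrs : r ≤ s)
    (hm : r + s ≤ m) (h𝒜 : 𝒜 ⊆ (Icc 1 (m + 1)).powersetCard r)
    (hℬ : ℬ ⊆ (Icc 1 (m + 1)).powersetCard s) (hcross : CrossIntersecting 𝒜 ℬ) (hr : 0 < r)
    (hr𝒜 : Icc 1 r ∈ 𝒜.nonMemberSubfamily (m + 1)) (hsℬ : Icc 1 s ∈ ℬ.nonMemberSubfamily (m + 1))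
    (h𝒜₁ : 𝒜.memberSubfamily (m + 1) = ∅) :
    #𝒜 + #ℬ + (m + 1 - r).choose s ≤ 1 + (m + 1).choose s := by
  have h₀ := ih.nonMemberSubfamily hrs hm h𝒜 hℬ hcross hr𝒜 hsℬ
  have hℬ₁ := card_memberSubfamily_add_choose_le (by omega) hℬ hcross hr𝒜
  have h𝒜card := card_memberSubfamily_add_card_nonMemberSubfamily (m + 1) 𝒜
  have hℬcard := card_memberSubfamily_add_card_nonMemberSubfamily (m + 1) ℬ
  rw [h𝒜₁, card_empty] at h𝒜card
  rw [show m + 1 - r = m - r + 1 by omega, Nat.choose_succ_left _ _ (by omega),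
    Nat.choose_succ_left _ _ (by omega)]
  omega

theorem BoundAt.succ_of_memberSubfamily_right_eq_empty (ih : BoundAt m) (hrs : r < s)
    (hm : r + s ≤ m) (h𝒜 : 𝒜 ⊆ (Icc 1 (m + 1)).powersetCard r)
    (hℬ : ℬ ⊆ (Icc 1 (m + 1)).powersetCard s) (hcross : CrossIntersecting 𝒜 ℬ) (hr : 0 < r)
    (hsℬ : Icc 1 s ∈ ℬ.nonMemberSubfamily (m + 1))
    (h𝒜₁ : (𝒜.memberSubfamily (m + 1)).Nonempty) (hℬ₁ : ℬ.memberSubfamily (m + 1) = ∅) :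
    #𝒜 + #ℬ + (m + 1 - r).choose s ≤ 1 + (m + 1).choose s := by
  have h₁ := ih (r - 1) s _ _ (by omega) (by omega) (memberSubfamily_subset_Icc h𝒜)
    (nonMemberSubfamily_subset_Icc hℬ) h𝒜₁ ⟨_, hsℬ⟩
    (hcross.memberSubfamily_nonMemberSubfamily (m + 1))
  have h₀ : #(𝒜.nonMemberSubfamily (m + 1)) ≤ m.choose (s - 1) :=
    calc #(𝒜.nonMemberSubfamily (m + 1))
      _ ≤ #((Icc 1 m).powersetCard r) := card_le_card (nonMemberSubfamily_subset_Icc h𝒜)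
      _ = m.choose r := by simp
      _ ≤ m.choose (s - 1) := Nat.choose_le_choose_of_le_of_add_le (by omega) (by omega)
  have h𝒜card := card_memberSubfamily_add_card_nonMemberSubfamily (m + 1) 𝒜
  have hℬcard := card_memberSubfamily_add_card_nonMemberSubfamily (m + 1) ℬ
  rw [hℬ₁, card_empty] at hℬcard
  rw [show m - (r - 1) = m + 1 - r by omega] at h₁
  rw [Nat.choose_succ_left m s (by omega)]
  omega

theorem BoundAt.succ_of_memberSubfamily_nonempty (ih : BoundAt m) (hrs : r ≤ s)
    (hm : r + s ≤ m) (h𝒜 : 𝒜 ⊆ (Icc 1 (m + 1)).powersetCard r)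
    (hℬ : ℬ ⊆ (Icc 1 (m + 1)).powersetCard s) (hcross : CrossIntersecting 𝒜 ℬ) (hr : 0 < r)
    (hsh : Shifted (Icc 1 (m + 1)) 𝒜) (hr𝒜 : Icc 1 r ∈ 𝒜.nonMemberSubfamily (m + 1))
    (hsℬ : Icc 1 s ∈ ℬ.nonMemberSubfamily (m + 1))
    (h𝒜₁ : (𝒜.memberSubfamily (m + 1)).Nonempty) (hℬ₁ : (ℬ.memberSubfamily (m + 1)).Nonempty) :
    #𝒜 + #ℬ + (m + 1 - r).choose s ≤ 1 + (m + 1).choose s := by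
  have hcross₁ := hsh.crossIntersecting_memberSubfamily h𝒜 hℬ (by omega) hcross
  have hs : 2 ≤ s := by
    obtain ⟨B, hB⟩ := hℬ₁
    have hBs := (mem_powersetCard.1 (memberSubfamily_subset_Icc hℬ hB)).2
    have := card_pos.2 (hcross₁.symm.nonempty_of_mem_left hB h𝒜₁)
    omega
  have h₀ := ih.nonMemberSubfamily hrs hm h𝒜 hℬ hcross hr𝒜 hsℬ
  have h₁ := ih (r - 1) (s - 1) _ _ (by omega) (by omega) (memberSubfamily_subset_Icc h𝒜)
    (memberSubfamily_subset_Icc hℬ) h𝒜₁ hℬ₁ hcross₁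
  have hpos : 0 < (m - r).choose (s - 2) := Nat.choose_pos (by omega)
  have h𝒜card := card_memberSubfamily_add_card_nonMemberSubfamily (m + 1) 𝒜
  have hℬcard := card_memberSubfamily_add_card_nonMemberSubfamily (m + 1) ℬ
  rw [show m - (r - 1) = m - r + 1 by omega, Nat.choose_succ_left _ _ (by omega),
    show s - 1 - 1 = s - 2 by omega] at h₁
  rw [show m + 1 - r = m - r + 1 by omega, Nat.choose_succ_left _ _ (by omega),
    Nat.choose_succ_left _ _ (by omega)]
  omega

theorem BoundAt.succ_of_shifted (ih : BoundAt m) (hrs : r ≤ s) (hm : r + s ≤ m)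
    (h𝒜 : 𝒜 ⊆ (Icc 1 (m + 1)).powersetCard r) (hℬ : ℬ ⊆ (Icc 1 (m + 1)).powersetCard s)
    (h𝒜ne : 𝒜.Nonempty) (hℬne : ℬ.Nonempty) (hcross : CrossIntersecting 𝒜 ℬ)
    (hsh𝒜 : Shifted (Icc 1 (m + 1)) 𝒜) (hshℬ : Shifted (Icc 1 (m + 1)) ℬ) :
    #𝒜 + #ℬ + (m + 1 - r).choose s ≤ 1 + (m + 1).choose s := by
  have hr : 0 < r := by
    obtain ⟨A, hA⟩ := h𝒜ne
    rw [← (mem_powersetCard.1 (h𝒜 hA)).2]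
    exact card_pos.2 (hcross.nonempty_of_mem_left hA hℬne)
  have hr𝒜 : Icc 1 r ∈ 𝒜.nonMemberSubfamily (m + 1) :=
    mem_nonMemberSubfamily.2 ⟨hsh𝒜.Icc_mem h𝒜 h𝒜ne, by simp; omega⟩
  have hsℬ : Icc 1 s ∈ ℬ.nonMemberSubfamily (m + 1) :=
    mem_nonMemberSubfamily.2 ⟨hshℬ.Icc_mem hℬ hℬne, by simp; omega⟩
  rcases (𝒜.memberSubfamily (m + 1)).eq_empty_or_nonempty with h𝒜₁ | h𝒜₁
  · exact ih.succ_of_memberSubfamily_eq_empty hrs hm h𝒜 hℬ hcross hr hr𝒜 hsℬ h𝒜₁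
  rcases (ℬ.memberSubfamily (m + 1)).eq_empty_or_nonempty with hℬ₁ | hℬ₁
  · rcases hrs.lt_or_eq with hrs | rfl
    · exact ih.succ_of_memberSubfamily_right_eq_empty hrs hm h𝒜 hℬ hcross hr hsℬ h𝒜₁ hℬ₁
    · -- for `r = s` the two families play symmetric roles
      rw [add_comm #𝒜]
      exact ih.succ_of_memberSubfamily_eq_empty le_rfl hm hℬ h𝒜 hcross.symm hr hsℬ hr𝒜 hℬ₁
  · exact ih.succ_of_memberSubfamily_nonempty hrs hm h𝒜 hℬ hcross hr hsh𝒜 hr𝒜 hsℬ h𝒜₁ hℬ₁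

theorem BoundAt.succ (ih : BoundAt m) : BoundAt (m + 1) := by
  intro r s 𝒜 ℬ hrs hn h𝒜 hℬ h𝒜ne hℬne hcross
  rcases hn.eq_or_lt with hn | hn
  · exact bound_of_add_eq hn h𝒜 hℬ hcross
  obtain ⟨𝒜', ℬ', h𝒜', hℬ', hcard𝒜, hcardℬ, hcross', hsh𝒜, hshℬ⟩ :=
    exists_shifted _ 𝒜 ℬ h𝒜 hℬ hcross
  rw [← hcard𝒜, ← hcardℬ]
  exact ih.succ_of_shifted hrs (by omega) h𝒜' hℬ' (card_pos.1 (hcard𝒜 ▸ card_pos.2 h𝒜ne))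
    (card_pos.1 (hcardℬ ▸ card_pos.2 hℬne)) hcross' hsh𝒜 hshℬ

end Step

theorem boundAt : ∀ n, BoundAt n
  | 0 => fun _ _ _ _ _ hn h𝒜 hℬ _ _ hcross => bound_of_add_eq (by omega) h𝒜 hℬ hcross
  | m + 1 => (boundAt m).succ

end FranklTokushige

theorem frankl_tokushige_general (n r s : ℕ) (hrs : r ≤ s) (hn : r + s ≤ n)
    (𝒜 ℬ : Finset (Finset ℕ))
    (h𝒜 : ∀ A ∈ 𝒜, A ⊆ Finset.Icc 1 n ∧ A.card = r)
    (hℬ : ∀ B ∈ ℬ, B ⊆ Finset.Icc 1 n ∧ B.card = s)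
    (h𝒜ne : 𝒜.Nonempty) (hℬne : ℬ.Nonempty)
    (hcross : ∀ A ∈ 𝒜, ∀ B ∈ ℬ, (A ∩ B).Nonempty) :
    𝒜.card + ℬ.card ≤ 1 + n.choose s - (n - r).choose s := by
  have h := FranklTokushige.boundAt n r s 𝒜 ℬ hrs hn (fun A hA => mem_powersetCard.2 (h𝒜 A hA))
    (fun B hB => mem_powersetCard.2 (hℬ B hB)) h𝒜ne hℬne hcross
  have hmono : (n - r).choose s ≤ n.choose s := Nat.choose_le_choose s (n.sub_le r)
  omega

theorem frankl_tokushige (n r s : ℕ) (hr : 1 ≤ r) (hrs : r ≤ s) (hn : r + s ≤ n)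
    (𝒜 ℬ : Finset (Finset ℕ))
    (h𝒜 : ∀ A ∈ 𝒜, A ⊆ Finset.Icc 1 n ∧ A.card = r)
    (hℬ : ∀ B ∈ ℬ, B ⊆ Finset.Icc 1 n ∧ B.card = s)
    (h𝒜ne : 𝒜.Nonempty) (hℬne : ℬ.Nonempty)
    (hcross : ∀ A ∈ 𝒜, ∀ B ∈ ℬ, (A ∩ B).Nonempty) :
    𝒜.card + ℬ.card ≤ 1 + n.choose s - (n - r).choose s :=
  frankl_tokushige_general n r s hrs hn 𝒜 ℬ h𝒜 hℬ h𝒜ne hℬne hcross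
end

section
/- (Hilton–Milner cross-intersecting theorem) Let 1 ≤ r ≤ n/2. If A and B are non-empty cross-intersecting subfamilies of ([n] choose r), then |A| + |B| ≤ C(n,r) − C(n−r,r) + 1. -/
/-!
By `UV`-compressions `{i} ↦ {j}` with `i < j`, which preserve sizes, uniformity and
cross-intersection and strictly decrease the total sum of the elements unless they act trivially,
both families may be assumed shifted. If `#X = 2r`, complementation in `X` gives the bound.
Otherwise split off the largest element `m` of `X`. The members avoiding `m` form nonempty
(by shiftedness) cross-intersecting `r`-uniform families on `X \ {m}`, bounded by induction.
The links at `m` are cross-intersecting by shiftedness, hence bounded by induction at `r - 1`,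
unless one of them is empty, in which case the other consists of `(r - 1)`-sets meeting a fixed
`r`-set avoiding `m`. Pascal's rule adds the two bounds up.
-/

open Finset
open scoped FinsetFamily

namespace HiltonMilner

section CrossIntersecting

variable {α : Type*} [DecidableEq α] {𝒜 ℬ 𝒜' ℬ' : Finset (Finset α)} {A B S X : Finset α}
  {i j : α} {r s t : ℕ}

def CrossIntersecting (𝒜 ℬ : Finset (Finset α)) : Prop :=
  ∀ A ∈ 𝒜, ∀ B ∈ ℬ, (A ∩ B).Nonempty

lemma CrossIntersecting.symm (h : CrossIntersecting 𝒜 ℬ) : CrossIntersecting ℬ 𝒜 :=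
  fun B hB A hA => inter_comm A B ▸ h A hA B hB

lemma CrossIntersecting.mono (h : CrossIntersecting 𝒜 ℬ) (h𝒜 : 𝒜' ⊆ 𝒜) (hℬ : ℬ' ⊆ ℬ) :
    CrossIntersecting 𝒜' ℬ' :=
  fun A hA B hB => h A (h𝒜 hA) B (hℬ hB)

lemma CrossIntersecting.pos_of_subset_powersetCard (h : CrossIntersecting 𝒜 ℬ)
    (h𝒜 : 𝒜 ⊆ powersetCard r X) (h𝒜ne : 𝒜.Nonempty) (hℬne : ℬ.Nonempty) : 0 < r := by
  obtain ⟨A, hA⟩ := h𝒜ne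
  obtain ⟨B, hB⟩ := hℬne
  rw [← (mem_powersetCard.1 (h𝒜 hA)).2]
  exact card_pos.2 ((h A hA B hB).mono inter_subset_left)

lemma card_add_choose_le_of_forall_inter_nonempty (h𝒜 : 𝒜 ⊆ powersetCard t X) (hS : S ⊆ X)
    (hmeet : ∀ A ∈ 𝒜, (A ∩ S).Nonempty) :
    #𝒜 + (#X - #S).choose t ≤ (#X).choose t := by
  have hdisj : Disjoint 𝒜 (powersetCard t (X \ S)) := by
    refine disjoint_left.2 fun A hA hAS => ?_
    obtain ⟨x, hx⟩ := hmeet A hA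
    exact (mem_sdiff.1 ((mem_powersetCard.1 hAS).1 (mem_inter.1 hx).1)).2 (mem_inter.1 hx).2
  calc #𝒜 + (#X - #S).choose t = #(𝒜 ∪ powersetCard t (X \ S)) := by
        rw [card_union_of_disjoint hdisj, card_powersetCard, card_sdiff_of_subset hS]
    _ ≤ #(powersetCard t X) := card_le_card (union_subset h𝒜 (powersetCard_mono sdiff_subset))
    _ = (#X).choose t := card_powersetCard t X

-- Complementation inside `X` maps `ℬ` injectively to `r`-sets of `X` that are not in `𝒜`.
lemma CrossIntersecting.card_add_card_le_choose (h : CrossIntersecting 𝒜 ℬ)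
    (h𝒜 : 𝒜 ⊆ powersetCard r X) (hℬ : ℬ ⊆ powersetCard s X) (hrs : r + s = #X) :
    #𝒜 + #ℬ ≤ (#X).choose r := by
  have hinj : Set.InjOn (X \ ·) ℬ := fun B hB B' hB' hBB' => by
    rw [← Finset.sdiff_sdiff_eq_self (mem_powersetCard.1 (hℬ hB)).1,
      ← Finset.sdiff_sdiff_eq_self (mem_powersetCard.1 (hℬ hB')).1]
    exact congrArg (X \ ·) hBB'
  have hdisj : Disjoint 𝒜 (ℬ.image (X \ ·)) := by
    refine disjoint_left.2 fun A hA hAc => ?_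
    obtain ⟨B, hB, rfl⟩ := mem_image.1 hAc
    obtain ⟨x, hx⟩ := h _ hA B hB
    exact (mem_sdiff.1 (mem_inter.1 hx).1).2 (mem_inter.1 hx).2
  have hcompl : ℬ.image (X \ ·) ⊆ powersetCard r X := by
    intro C hC
    obtain ⟨B, hB, rfl⟩ := mem_image.1 hC
    obtain ⟨hBX, hBr⟩ := mem_powersetCard.1 (hℬ hB)
    rw [mem_powersetCard, card_sdiff_of_subset hBX]
    exact ⟨sdiff_subset, by omega⟩
  calc #𝒜 + #ℬ = #(𝒜 ∪ ℬ.image (X \ ·)) := by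
        rw [card_union_of_disjoint hdisj, card_image_of_injOn hinj]
    _ ≤ #(powersetCard r X) := card_le_card (union_subset h𝒜 hcompl)
    _ = (#X).choose r := card_powersetCard r X

lemma compress_singleton_singleton :
    UV.compress {i} {j} A = if i ∉ A ∧ j ∈ A then insert i (A.erase j) else A := by
  simp only [UV.compress, disjoint_singleton_left, singleton_subset_iff]
  split_ifs with h
  · ext x
    simp only [sup_eq_union, mem_sdiff, mem_union, mem_singleton, mem_insert, mem_erase]
    grind
  · rfl

lemma compress_mem_powersetCard (hi : i ∈ X) (hA : A ∈ powersetCard r X) :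
    UV.compress {i} {j} A ∈ powersetCard r X := by
  rw [compress_singleton_singleton]
  split_ifs with h
  · obtain ⟨hAX, hAr⟩ := mem_powersetCard.1 hA
    have hi' : i ∉ A.erase j := fun h' => h.1 (mem_of_mem_erase h')
    rw [mem_powersetCard, card_insert_of_notMem hi', card_erase_of_mem h.2]
    exact ⟨insert_subset hi (erase_subset j A |>.trans hAX), by
      have := card_pos.2 ⟨j, h.2⟩; omega⟩
  · exact hA

lemma compression_subset_powersetCard (hi : i ∈ X) (h𝒜 : 𝒜 ⊆ powersetCard r X) :
    𝓒 {i} {j} 𝒜 ⊆ powersetCard r X := by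
  intro A hA
  rcases UV.mem_compression.1 hA with ⟨hA, -⟩ | ⟨-, B, hB, rfl⟩
  · exact h𝒜 hA
  · exact compress_mem_powersetCard hi (h𝒜 hB)

lemma CrossIntersecting.inter_compress_nonempty (h : CrossIntersecting 𝒜 ℬ) (hA : A ∈ 𝒜)
    (hcA : UV.compress {i} {j} A ∈ 𝒜) (hB : B ∈ ℬ) : (A ∩ UV.compress {i} {j} B).Nonempty := by
  by_cases hB' : i ∉ B ∧ j ∈ B
  swap
  · rw [compress_singleton_singleton, if_neg hB']
    exact h A hA B hB
  rw [compress_singleton_singleton, if_pos hB']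
  obtain ⟨x, hx⟩ := h A hA B hB
  rw [mem_inter] at hx
  by_cases hxj : x = j
  swap
  · exact ⟨x, mem_inter.2 ⟨hx.1, mem_insert_of_mem (mem_erase.2 ⟨hxj, hx.2⟩)⟩⟩
  subst hxj
  by_cases hiA : i ∈ A
  · exact ⟨i, mem_inter.2 ⟨hiA, mem_insert_self _ _⟩⟩
  -- otherwise `A` is moved as well, and its image meets `B` away from `i` and `x`
  rw [compress_singleton_singleton, if_pos ⟨hiA, hx.1⟩] at hcA
  obtain ⟨y, hy⟩ := h _ hcA B hB
  refine ⟨y, ?_⟩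
  simp only [mem_inter, mem_insert, mem_erase] at hy ⊢
  grind

lemma CrossIntersecting.compression (h : CrossIntersecting 𝒜 ℬ) :
    CrossIntersecting (𝓒 {i} {j} 𝒜) (𝓒 {i} {j} ℬ) := by
  intro A' hA' B' hB'
  rcases UV.mem_compression.1 hA' with ⟨hA, hcA⟩ | ⟨hA'𝒜, A, hA, rfl⟩ <;>
    rcases UV.mem_compression.1 hB' with ⟨hB, hcB⟩ | ⟨hB'ℬ, B, hB, rfl⟩
  · exact h _ hA _ hB
  · exact h.inter_compress_nonempty hA hcA hB
  · rw [inter_comm]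
    exact h.symm.inter_compress_nonempty hB hcB hA
  · have hiA := UV.le_of_mem_compression_of_notMem hA' hA'𝒜
    have hiB := UV.le_of_mem_compression_of_notMem hB' hB'ℬ
    exact ⟨i, mem_inter.2 ⟨singleton_subset_iff.1 hiA, singleton_subset_iff.1 hiB⟩⟩

lemma nonMemberSubfamily_subset_powersetCard (a : α) (h𝒜 : 𝒜 ⊆ powersetCard r X) :
    𝒜.nonMemberSubfamily a ⊆ powersetCard r (X.erase a) := by
  intro A hA
  obtain ⟨hA, haA⟩ := mem_nonMemberSubfamily.1 hA
  obtain ⟨hAX, hAr⟩ := mem_powersetCard.1 (h𝒜 hA)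
  exact mem_powersetCard.2 ⟨subset_erase.2 ⟨hAX, haA⟩, hAr⟩

lemma memberSubfamily_subset_powersetCard (a : α) (h𝒜 : 𝒜 ⊆ powersetCard r X) :
    𝒜.memberSubfamily a ⊆ powersetCard (r - 1) (X.erase a) := by
  intro A hA
  obtain ⟨hA, haA⟩ := mem_memberSubfamily.1 hA
  obtain ⟨hAX, hAr⟩ := mem_powersetCard.1 (h𝒜 hA)
  rw [card_insert_of_notMem haA] at hAr
  exact mem_powersetCard.2 ⟨subset_erase.2 ⟨(subset_insert a A).trans hAX, haA⟩, by omega⟩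

lemma CrossIntersecting.card_memberSubfamily_add_choose_le {a : α} (h : CrossIntersecting 𝒜 ℬ)
    (ha : a ∈ X) (hA : A ∈ 𝒜) (haA : a ∉ A) (h𝒜 : 𝒜 ⊆ powersetCard r X)
    (hℬ : ℬ ⊆ powersetCard r X) :
    #(ℬ.memberSubfamily a) + (#X - 1 - r).choose (r - 1) ≤ (#X - 1).choose (r - 1) := by
  obtain ⟨hAX, hAr⟩ := mem_powersetCard.1 (h𝒜 hA)
  have hmeet : ∀ B ∈ ℬ.memberSubfamily a, (B ∩ A).Nonempty := by
    intro B hB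
    obtain ⟨x, hx⟩ := h A hA _ (mem_memberSubfamily.1 hB).1
    refine ⟨x, ?_⟩
    simp only [mem_inter, mem_insert] at hx ⊢
    grind
  have := card_add_choose_le_of_forall_inter_nonempty (memberSubfamily_subset_powersetCard a hℬ)
    (subset_erase.2 ⟨hAX, haA⟩) hmeet
  rwa [card_erase_of_mem ha, hAr] at this

end CrossIntersecting

section Shifting

variable {X : Finset ℕ} {𝒜 ℬ : Finset (Finset ℕ)} {A : Finset ℕ} {i j : ℕ}

def Shifted (X : Finset ℕ) (𝒜 : Finset (Finset ℕ)) : Prop :=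
  ∀ i ∈ X, ∀ j, i < j → UV.IsCompressed {i} {j} 𝒜

lemma Shifted.insert_erase_mem (h : Shifted X 𝒜) (hA : A ∈ 𝒜) (hi : i ∈ X) (hij : i < j)
    (hiA : i ∉ A) (hjA : j ∈ A) : insert i (A.erase j) ∈ 𝒜 := by
  have := UV.compress_mem_compression (u := {i}) (v := {j}) hA
  rwa [h i hi j hij, compress_singleton_singleton, if_pos ⟨hiA, hjA⟩] at this

def weight (𝒜 : Finset (Finset ℕ)) : ℕ := ∑ A ∈ 𝒜, ∑ a ∈ A, a

lemma sum_compress_lt (hij : i < j) (h : UV.compress {i} {j} A ≠ A) :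
    ∑ a ∈ UV.compress {i} {j} A, a < ∑ a ∈ A, a := by
  rw [compress_singleton_singleton] at h ⊢
  split_ifs at h ⊢ with hA
  · rw [sum_insert fun h' => hA.1 (mem_of_mem_erase h'), ← add_sum_erase A _ hA.2]
    omega
  · exact absurd rfl h

lemma weight_compression_lt (hij : i < j) (h : 𝓒 {i} {j} 𝒜 ≠ 𝒜) :
    weight (𝓒 {i} {j} 𝒜) < weight 𝒜 := by
  have hmoved : {A ∈ 𝒜 | UV.compress {i} {j} A ∉ 𝒜}.Nonempty := by
    contrapose! h
    rw [UV.compression, filter_image, h, image_empty, union_empty]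
    exact filter_true_of_mem fun A hA => by simpa using filter_eq_empty_iff.1 h hA
  rw [weight, weight, UV.compression, sum_union UV.compress_disjoint, filter_image,
    sum_image UV.compress_injOn, ← sum_filter_add_sum_filter_not 𝒜 (UV.compress {i} {j} · ∈ 𝒜)]
  refine add_lt_add_right (sum_lt_sum_of_nonempty hmoved fun A hA => sum_compress_lt hij ?_) _
  exact fun hAA => (mem_filter.1 hA).2 (by rw [hAA]; exact (mem_filter.1 hA).1)

lemma weight_compression_le (hij : i < j) : weight (𝓒 {i} {j} 𝒜) ≤ weight 𝒜 := by
  by_cases h : 𝓒 {i} {j} 𝒜 = 𝒜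
  · rw [h]
  · exact (weight_compression_lt hij h).le

theorem exists_shifted {P : Finset (Finset ℕ) → Finset (Finset ℕ) → Prop}
    (hP : ∀ i ∈ X, ∀ j, i < j → ∀ 𝒜 ℬ, P 𝒜 ℬ → P (𝓒 {i} {j} 𝒜) (𝓒 {i} {j} ℬ))
    (𝒜 ℬ : Finset (Finset ℕ)) (h : P 𝒜 ℬ) :
    ∃ 𝒜' ℬ', P 𝒜' ℬ' ∧ #𝒜' = #𝒜 ∧ #ℬ' = #ℬ ∧ Shifted X 𝒜' ∧ Shifted X ℬ' := by
  by_cases hs : Shifted X 𝒜 ∧ Shifted X ℬ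
  · exact ⟨𝒜, ℬ, h, rfl, rfl, hs⟩
  obtain ⟨i, hi, j, hij, hne⟩ :
      ∃ i ∈ X, ∃ j, i < j ∧ (𝓒 {i} {j} 𝒜 ≠ 𝒜 ∨ 𝓒 {i} {j} ℬ ≠ ℬ) := by
    simp only [Shifted, UV.IsCompressed, ← forall_and, not_forall] at hs
    grind
  have : weight (𝓒 {i} {j} 𝒜) + weight (𝓒 {i} {j} ℬ) < weight 𝒜 + weight ℬ := by
    have := weight_compression_le (𝒜 := 𝒜) hij
    have := weight_compression_le (𝒜 := ℬ) hij
    rcases hne with hne | hne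
    · have := weight_compression_lt hij hne; omega
    · have := weight_compression_lt hij hne; omega
  obtain ⟨𝒜', ℬ', hP', h𝒜', hℬ', hs'⟩ := exists_shifted hP _ _ (hP i hi j hij 𝒜 ℬ h)
  exact ⟨𝒜', ℬ', hP', by rw [h𝒜', UV.card_compression], by rw [hℬ', UV.card_compression], hs'⟩
termination_by weight 𝒜 + weight ℬ

end Shifting

section MaxElement

variable {X : Finset ℕ} {𝒜 ℬ : Finset (Finset ℕ)} {m r : ℕ}

lemma Shifted.nonMemberSubfamily_nonempty (hs : Shifted X 𝒜) (hm : ∀ x ∈ X, x ≤ m)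
    (h𝒜 : 𝒜 ⊆ powersetCard r X) (hrX : r < #X) (hne : 𝒜.Nonempty) :
    (𝒜.nonMemberSubfamily m).Nonempty := by
  obtain ⟨A, hA⟩ := hne
  obtain ⟨hAX, hAr⟩ := mem_powersetCard.1 (h𝒜 hA)
  by_cases hmA : m ∈ A
  · obtain ⟨x, hxX, hxA⟩ := exists_mem_notMem_of_card_lt_card (s := A) (hAr ▸ hrX)
    have hxm : x < m := (hm x hxX).lt_of_ne fun hxm => hxA (hxm ▸ hmA)
    refine ⟨insert x (A.erase m), mem_nonMemberSubfamily.2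
      ⟨hs.insert_erase_mem hA hxX hxm hxA hmA, ?_⟩⟩
    simp [hxm.ne']
  · exact ⟨A, mem_nonMemberSubfamily.2 ⟨hA, hmA⟩⟩

lemma Shifted.crossIntersecting_memberSubfamily (hs : Shifted X 𝒜) (hm : ∀ x ∈ X, x ≤ m)
    (h𝒜 : 𝒜 ⊆ powersetCard r X) (hℬ : ℬ ⊆ powersetCard r X) (hrX : 2 * r ≤ #X)
    (h : CrossIntersecting 𝒜 ℬ) :
    CrossIntersecting (𝒜.memberSubfamily m) (ℬ.memberSubfamily m) := by
  intro A hA B hB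
  obtain ⟨hA, hmA⟩ := mem_memberSubfamily.1 hA
  obtain ⟨hB, hmB⟩ := mem_memberSubfamily.1 hB
  -- both sets contain `m`, so together they miss some `x ∈ X`, and `m` can be shifted to `x`
  have hcard : #(insert m A ∪ insert m B) < #X := by
    have := card_union_add_card_inter (insert m A) (insert m B)
    have := card_pos.2 (⟨m, by simp⟩ : (insert m A ∩ insert m B).Nonempty)
    have := (mem_powersetCard.1 (h𝒜 hA)).2
    have := (mem_powersetCard.1 (hℬ hB)).2
    omega
  obtain ⟨x, hxX, hxAB⟩ := exists_mem_notMem_of_card_lt_card hcard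
  simp only [mem_union, mem_insert, not_or] at hxAB
  have hxm : x < m := (hm x hxX).lt_of_ne hxAB.1.1
  have hshift := hs.insert_erase_mem hA hxX hxm (by simp [hxAB.1.1, hxAB.1.2]) (mem_insert_self m A)
  rw [erase_insert hmA] at hshift
  obtain ⟨y, hy⟩ := h _ hshift _ hB
  refine ⟨y, ?_⟩
  simp only [mem_inter, mem_insert] at hy ⊢
  grind

end MaxElement

-- The subtracted binomial is moved to the left to avoid truncated subtraction.
def HiltonMilnerBound (X : Finset ℕ) (r : ℕ) : Prop :=
  ∀ 𝒜 ℬ : Finset (Finset ℕ), 𝒜 ⊆ powersetCard r X → ℬ ⊆ powersetCard r X →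
    𝒜.Nonempty → ℬ.Nonempty → CrossIntersecting 𝒜 ℬ →
    #𝒜 + #ℬ + (#X - r).choose r ≤ (#X).choose r + 1

section InductionStep

variable {X : Finset ℕ} {𝒜 ℬ : Finset (Finset ℕ)} {m r : ℕ}

lemma card_memberSubfamily_add_card_memberSubfamily_le (hmX : m ∈ X) (hm : ∀ x ∈ X, x ≤ m)
    (ih : HiltonMilnerBound (X.erase m) (r - 1)) (hrX : 2 * r < #X) (hs : Shifted X 𝒜)
    (h𝒜 : 𝒜 ⊆ powersetCard r X) (hℬ : ℬ ⊆ powersetCard r X)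
    (h𝒜₀ : (𝒜.nonMemberSubfamily m).Nonempty) (hℬ₀ : (ℬ.nonMemberSubfamily m).Nonempty)
    (h : CrossIntersecting 𝒜 ℬ) :
    #(𝒜.memberSubfamily m) + #(ℬ.memberSubfamily m) + (#X - 1 - r).choose (r - 1) ≤
      (#X - 1).choose (r - 1) := by
  rcases (𝒜.memberSubfamily m).eq_empty_or_nonempty with h𝒜₁ | h𝒜₁
  · obtain ⟨A, hA⟩ := h𝒜₀
    obtain ⟨hA, hmA⟩ := mem_nonMemberSubfamily.1 hA
    have := h.card_memberSubfamily_add_choose_le hmX hA hmA h𝒜 hℬ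
    rw [h𝒜₁, card_empty]
    omega
  rcases (ℬ.memberSubfamily m).eq_empty_or_nonempty with hℬ₁ | hℬ₁
  · obtain ⟨B, hB⟩ := hℬ₀
    obtain ⟨hB, hmB⟩ := mem_nonMemberSubfamily.1 hB
    have := h.symm.card_memberSubfamily_add_choose_le hmX hB hmB hℬ h𝒜
    rw [hℬ₁, card_empty]
    omega
  have h₁ := hs.crossIntersecting_memberSubfamily hm h𝒜 hℬ hrX.le h
  have hr : 0 < r - 1 :=
    h₁.pos_of_subset_powersetCard (memberSubfamily_subset_powersetCard m h𝒜) h𝒜₁ hℬ₁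
  have := ih _ _ (memberSubfamily_subset_powersetCard m h𝒜)
    (memberSubfamily_subset_powersetCard m hℬ) h𝒜₁ hℬ₁ h₁
  rw [card_erase_of_mem hmX, show #X - 1 - (r - 1) = #X - r by omega,
    Nat.choose_eq_choose_pred_add (by omega) hr, Nat.sub_right_comm] at this
  have : 0 < (#X - 1 - r).choose (r - 1 - 1) := Nat.choose_pos (by omega)
  omega

lemma card_add_card_add_choose_le_of_shifted (hmX : m ∈ X) (hm : ∀ x ∈ X, x ≤ m)
    (ih : ∀ s, 2 * s ≤ #(X.erase m) → HiltonMilnerBound (X.erase m) s) (hrX : 2 * r < #X)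
    (hs𝒜 : Shifted X 𝒜) (hsℬ : Shifted X ℬ) (h𝒜 : 𝒜 ⊆ powersetCard r X)
    (hℬ : ℬ ⊆ powersetCard r X) (h𝒜ne : 𝒜.Nonempty) (hℬne : ℬ.Nonempty)
    (h : CrossIntersecting 𝒜 ℬ) :
    #𝒜 + #ℬ + (#X - r).choose r ≤ (#X).choose r + 1 := by
  rw [card_erase_of_mem hmX] at ih
  have hr := h.pos_of_subset_powersetCard h𝒜 h𝒜ne hℬne
  have h𝒜₀ := hs𝒜.nonMemberSubfamily_nonempty hm h𝒜 (by omega) h𝒜ne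
  have hℬ₀ := hsℬ.nonMemberSubfamily_nonempty hm hℬ (by omega) hℬne
  have hbound₀ := ih r (by omega) _ _ (nonMemberSubfamily_subset_powersetCard m h𝒜)
    (nonMemberSubfamily_subset_powersetCard m hℬ) h𝒜₀ hℬ₀ (h.mono (filter_subset _ _)
    (filter_subset _ _))
  have hbound₁ := card_memberSubfamily_add_card_memberSubfamily_le hmX hm
    (ih (r - 1) (by omega)) hrX hs𝒜 h𝒜 hℬ h𝒜₀ hℬ₀ h
  rw [card_erase_of_mem hmX] at hbound₀
  rw [← card_memberSubfamily_add_card_nonMemberSubfamily m 𝒜,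
    ← card_memberSubfamily_add_card_nonMemberSubfamily m ℬ,
    Nat.choose_eq_choose_pred_add (n := #X) (by omega) hr,
    Nat.choose_eq_choose_pred_add (n := #X - r) (by omega) hr, Nat.sub_right_comm (#X) r 1]
  omega

end InductionStep

theorem hiltonMilnerBound_of_two_mul_le_card (X : Finset ℕ) (r : ℕ) (hrX : 2 * r ≤ #X) :
    HiltonMilnerBound X r := by
  intro 𝒜 ℬ h𝒜 hℬ h𝒜ne hℬne h
  rcases hrX.eq_or_lt with hX | hX
  · have := h.card_add_card_le_choose h𝒜 hℬ (by omega)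
    rw [show #X - r = r by omega, Nat.choose_self]
    omega
  have hXne : X.Nonempty := card_pos.1 (by omega)
  obtain ⟨𝒜', ℬ', ⟨h𝒜', hℬ', h'⟩, hcard𝒜, hcardℬ, hs𝒜, hsℬ⟩ := exists_shifted (X := X)
    (P := fun 𝒜 ℬ => 𝒜 ⊆ powersetCard r X ∧ ℬ ⊆ powersetCard r X ∧ CrossIntersecting 𝒜 ℬ)
    (fun i hi _ _ _ _ ⟨h𝒜, hℬ, h⟩ => ⟨compression_subset_powersetCard hi h𝒜,
      compression_subset_powersetCard hi hℬ, h.compression⟩) 𝒜 ℬ ⟨h𝒜, hℬ, h⟩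
  rw [← hcard𝒜, ← hcardℬ]
  refine card_add_card_add_choose_le_of_shifted (max'_mem X hXne) (fun x hx => le_max' X x hx)
    (fun s hs => hiltonMilnerBound_of_two_mul_le_card (X.erase _) s hs) hX hs𝒜 hsℬ h𝒜' hℬ'
    (card_pos.1 (hcard𝒜 ▸ card_pos.2 h𝒜ne)) (card_pos.1 (hcardℬ ▸ card_pos.2 hℬne)) h'
termination_by #X
decreasing_by exact card_erase_lt_of_mem (max'_mem X hXne)

end HiltonMilner

theorem hilton_milner_cross_general (n r : ℕ) (hrn : 2 * r ≤ n)
    (𝒜 ℬ : Finset (Finset ℕ))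
    (h𝒜 : ∀ A ∈ 𝒜, A ⊆ Finset.Icc 1 n ∧ A.card = r)
    (hℬ : ∀ B ∈ ℬ, B ⊆ Finset.Icc 1 n ∧ B.card = r)
    (h𝒜ne : 𝒜.Nonempty) (hℬne : ℬ.Nonempty)
    (hcross : ∀ A ∈ 𝒜, ∀ B ∈ ℬ, (A ∩ B).Nonempty) :
    𝒜.card + ℬ.card ≤ n.choose r - (n - r).choose r + 1 := by
  have hIcc : #(Icc 1 n) = n := by simp
  have := HiltonMilner.hiltonMilnerBound_of_two_mul_le_card (Icc 1 n) r (hIcc.symm ▸ hrn) 𝒜 ℬ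
    (fun A hA => mem_powersetCard.2 (h𝒜 A hA)) (fun B hB => mem_powersetCard.2 (hℬ B hB))
    h𝒜ne hℬne hcross
  rw [hIcc] at this
  omega

theorem hilton_milner_cross (n r : ℕ) (hr : 1 ≤ r) (hrn : 2 * r ≤ n)
    (𝒜 ℬ : Finset (Finset ℕ))
    (h𝒜 : ∀ A ∈ 𝒜, A ⊆ Finset.Icc 1 n ∧ A.card = r)
    (hℬ : ∀ B ∈ ℬ, B ⊆ Finset.Icc 1 n ∧ B.card = r)
    (h𝒜ne : 𝒜.Nonempty) (hℬne : ℬ.Nonempty)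
    (hcross : ∀ A ∈ 𝒜, ∀ B ∈ ℬ, (A ∩ B).Nonempty) :
    𝒜.card + ℬ.card ≤ n.choose r - (n - r).choose r + 1 :=
  hilton_milner_cross_general n r hrn 𝒜 ℬ h𝒜 hℬ h𝒜ne hℬne hcross
end
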